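/- arXiv:2312.00205 — 12 statements merged into one kernel-verified Lean document; each statement's English description precedes it below -/
import Mathlib

section
/- Let φ be a lower semicontinuous submeasure on ω with φ(ω) = ∞ such that the Σ⁰₂ ideal I = Fin(φ) is not countably generated. Then there exist A ∈ I⁺ (i.e. A ⊆ ω with A ∉ I), a sequence c ∈ ω^ω with c(n) ≥ 1 for all n, and a bijection f : A → T_c such that: (i) φ(f⁻¹[{t⌢(i) : i < c(n)}]) > n+1 for every n ∈ ω and every t ∈ T_c of length n; and (ii) f⁻¹[A_x] ∈ I for every x ∈ T̂_c. -/
open MeasureTheory Set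

/-- An ideal on a (countable) set `X`. -/
def IsIdeal {X : Type} (I : Set (Set X)) : Prop :=
  (∀ A B : Set X, A ∈ I → B ∈ I → A ∪ B ∈ I) ∧
  (∀ A B : Set X, A ⊆ B → B ∈ I → A ∈ I) ∧
  (∀ A : Set X, A.Finite → A ∈ I) ∧
  (Set.univ : Set X) ∉ I

/-- `I`-pointwise convergence on `[0,1]` of a family of functions. -/
def IConvPtwise {X : Type} (I : Set (Set X)) (f : X → ℝ → ℝ) (g : ℝ → ℝ) : Prop :=
  ∀ t ∈ Icc (0:ℝ) 1, ∀ ε : ℝ, 0 < ε → {a : X | ε ≤ |f a t - g t|} ∈ I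

/-- `I`-uniform convergence on `M` of a family of functions. -/
def IConvUnif {X : Type} (I : Set (Set X)) (f : X → ℝ → ℝ) (g : ℝ → ℝ) (M : Set ℝ) : Prop :=
  ∀ ε : ℝ, 0 < ε → {a : X | ∃ t ∈ M, ε ≤ |f a t - g t|} ∈ I

/-- `I` is an Egorov ideal. -/
def IsEgorov {X : Type} (I : Set (Set X)) : Prop :=
  ∀ (f : X → ℝ → ℝ) (g : ℝ → ℝ),
    (∀ a : X, AEMeasurable (f a) (volume.restrict (Icc (0:ℝ) 1))) →
    AEMeasurable g (volume.restrict (Icc (0:ℝ) 1)) →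
    IConvPtwise I f g →
    ∀ η : ℝ, 0 < η →
      ∃ M : Set ℝ, M ⊆ Icc (0:ℝ) 1 ∧ NullMeasurableSet M volume ∧
        volume (Icc (0:ℝ) 1 \ M) < ENNReal.ofReal η ∧
        IConvUnif I f g M

def IsSubmeasure (φ : Set ℕ → ENNReal) : Prop :=
  φ ∅ = 0 ∧ (∀ n : ℕ, φ {n} < ⊤) ∧
  ∀ A B : Set ℕ, φ A ≤ φ (A ∪ B) ∧ φ (A ∪ B) ≤ φ A + φ B

def IsLscSubmeasure (φ : Set ℕ → ENNReal) : Prop :=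
  ∀ A : Set ℕ, φ A = ⨆ n : ℕ, φ (A ∩ Iio n)

def IsNonpathological (φ : Set ℕ → ENNReal) : Prop :=
  ∀ A : Set ℕ, φ A = ⨆ (μ : Measure ℕ) (_ : ∀ B : Set ℕ, μ B ≤ φ B), μ A

/-- `I` is a non-pathological Σ⁰₂ ideal: `I = Fin(φ)` for some non-pathological
lsc submeasure `φ` with `φ(ω) = ∞`. -/
def IsNonpathSigma2 (I : Set (Set ℕ)) : Prop :=
  ∃ φ : Set ℕ → ENNReal, IsSubmeasure φ ∧ IsLscSubmeasure φ ∧ IsNonpathological φ ∧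
    φ Set.univ = ⊤ ∧ I = {A : Set ℕ | φ A < ⊤}

def IdealCountablyGenerated {X : Type} (I : Set (Set X)) : Prop :=
  ∃ B : Set (Set X), B.Countable ∧ B ⊆ I ∧
    ∀ A ∈ I, ∃ F : Set (Set X), F ⊆ B ∧ F.Finite ∧ A ⊆ ⋃₀ F

def IdealIso {X Y : Type} (I : Set (Set X)) (J : Set (Set Y)) : Prop :=
  ∃ f : Y → X, Function.Bijective f ∧ ∀ A : Set X, (A ∈ I ↔ f ⁻¹' A ∈ J)

def RKle {X Y : Type} (I : Set (Set X)) (J : Set (Set Y)) : Prop :=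
  ∃ f : Y → X, ∀ A : Set X, (A ∈ I ↔ f ⁻¹' A ∈ J)

def RBle {X Y : Type} (I : Set (Set X)) (J : Set (Set Y)) : Prop :=
  ∃ f : Y → X, (∀ x : X, (f ⁻¹' {x}).Finite) ∧ ∀ A : Set X, (A ∈ I ↔ f ⁻¹' A ∈ J)

/-- The restriction `I↾A` of an ideal, as an ideal on the subtype `↥A`. -/
def restrictIdeal {X : Type} (I : Set (Set X)) (A : Set X) : Set (Set ↥A) :=
  {S : Set ↥A | (Subtype.val '' S) ∈ I}

def IsTall {X : Type} (I : Set (Set X)) : Prop :=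
  ∀ A : Set X, A.Infinite → ∃ B ∈ I, B.Infinite ∧ B ⊆ A

/-- The tree `T_c` of finite sequences `s` with `s(i) < c(i)` for all `i < |s|`. -/
def Tc (c : ℕ → ℕ) : Set (List ℕ) := {s : List ℕ | ∀ i : Fin s.length, s.get i < c i.1}

/-- The branch `A_x = {x↾n : n ∈ ω}` of `x` through `T_c`. -/
def branchOf (x : ℕ → ℕ) : Set (List ℕ) := {s : List ℕ | ∃ n : ℕ, s = (List.range n).map x}

/-!
If for some `M` there is a nonempty family `G` of sets of submeasure `≤ M` such that every
`Y ∈ G` has `φ`-infinitely many one-point extensions `insert p Y ∈ G`, then `T_c` is built level by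
level inside `ω`: a node `t` carries a point `a t` and a label `Y t ∈ G`, and the children of a
node of length `n` get fresh points `p` with `insert p (Y t) ∈ G`, chosen of submeasure `> n + 1`
and padded so that all nodes of one level have the same number of children. Along a branch the
points lie in the increasing union of the labels, of submeasure `≤ M` by lower semicontinuity.

The largest family of this kind is the greatest fixed point of `extensionDerivative hφ M`. If it
is empty for every `M`, its ordinal approximations attach to each `Y` an ordinal and a set `S Y`, of finite submeasure when
`φ Y ≤ M`, such that adding a point outside `S Y` lowers the ordinal. Greedily adding points of
`A` then covers `A` by `Y ∪ S Y` with `Y ⊆ A` finite, so `Fin(φ)` is countably generated.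
-/

open scoped ENNReal
open OrdinalApprox

variable {φ : Set ℕ → ℝ≥0∞}

namespace IsSubmeasure

theorem monotone (hφ : IsSubmeasure φ) : Monotone φ := fun A B h => by
  simpa [Set.union_eq_self_of_subset_left h] using (hφ.2.2 A B).1

theorem union_le (hφ : IsSubmeasure φ) (A B : Set ℕ) : φ (A ∪ B) ≤ φ A + φ B :=
  (hφ.2.2 A B).2

theorem lt_top_of_finite (hφ : IsSubmeasure φ) {S : Set ℕ} (hS : S.Finite) : φ S < ⊤ := by
  induction S, hS using Set.Finite.induction_on with
  | empty => simp [hφ.1]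
  | @insert p S _ _ ih =>
    rw [Set.insert_eq]
    exact (hφ.union_le _ _).trans_lt (ENNReal.add_lt_top.2 ⟨hφ.2.1 p, ih⟩)

theorem diff_eq_top (hφ : IsSubmeasure φ) {Z U : Set ℕ} (hZ : φ Z = ⊤) (hU : U.Finite) :
    φ (Z \ U) = ⊤ := by
  have hle : φ Z ≤ φ (Z \ U) + φ U :=
    (hφ.monotone (by rw [Set.sdiff_union_self]; exact subset_union_left)).trans (hφ.union_le _ _)
  by_contra h
  exact (ENNReal.add_lt_top.2 ⟨lt_top_iff_ne_top.2 h, hφ.lt_top_of_finite hU⟩).not_ge (hZ ▸ hle)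

theorem infinite_of_eq_top (hφ : IsSubmeasure φ) {Z : Set ℕ} (hZ : φ Z = ⊤) : Z.Infinite :=
  fun hfin => (hφ.lt_top_of_finite hfin).ne hZ

end IsSubmeasure

theorem IsLscSubmeasure.exists_finset_subset_lt (hlsc : IsLscSubmeasure φ) {Z : Set ℕ}
    {b : ℝ≥0∞} (hb : b < φ Z) : ∃ F : Finset ℕ, ↑F ⊆ Z ∧ b < φ F := by
  rw [hlsc Z, lt_iSup_iff] at hb
  obtain ⟨n, hn⟩ := hb
  have hfin : (Z ∩ Iio n).Finite := (finite_Iio n).subset inter_subset_right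
  exact ⟨hfin.toFinset, by simp, by simpa using hn⟩

theorem IsLscSubmeasure.iUnion_le_of_monotone (hlsc : IsLscSubmeasure φ) (hmono : Monotone φ)
    {S : ℕ → Set ℕ} (hS : Monotone S) {m : ℝ≥0∞} (hm : ∀ n, φ (S n) ≤ m) :
    φ (⋃ n, S n) ≤ m := by
  rw [hlsc]
  refine iSup_le fun N => ?_
  have hfin : ((⋃ n, S n) ∩ Iio N).Finite := (finite_Iio N).subset inter_subset_right
  obtain ⟨n, hn⟩ := hS.directed_le.exists_mem_subset_of_finset_subset_biUnion
    (s := hfin.toFinset) (by simp)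
  exact (hmono (by simpa using hn)).trans (hm n)

theorem Set.InjOn.exists_injective_range_eq {α β : Type*} {a : α → β} {s : Set α}
    (h : InjOn a s) :
    ∃ f : ↥(a '' s) → α, Function.Injective f ∧ range f = s ∧
      ∀ S, Subtype.val '' (f ⁻¹' S) = a '' (S ∩ s) := by
  let e := h.bijOn_image.equiv a
  refine ⟨fun q => (e.symm q : α), Subtype.val_injective.comp e.symm.injective, ?_, fun S => ?_⟩
  · ext x
    refine ⟨fun ⟨q, hq⟩ => hq ▸ (e.symm q).2, fun hx => ⟨e ⟨x, hx⟩, by simp⟩⟩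
  · ext y
    constructor
    · rintro ⟨q, hq, rfl⟩
      exact ⟨e.symm q, ⟨hq, (e.symm q).2⟩, congrArg Subtype.val (e.apply_symm_apply q)⟩
    · rintro ⟨x, ⟨hxS, hxs⟩, rfl⟩
      exact ⟨e ⟨x, hxs⟩, by simpa using hxS, rfl⟩

theorem mem_Tc_append_singleton {c : ℕ → ℕ} {t : List ℕ} {i : ℕ} :
    t ++ [i] ∈ Tc c ↔ t ∈ Tc c ∧ i < c t.length := by
  simp only [Tc, mem_ofPred_eq, Fin.forall_iff, List.get_eq_getElem, List.length_append,
    List.length_singleton]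
  constructor
  · intro h
    refine ⟨fun j hj => ?_, ?_⟩
    · simpa [List.getElem_append_left hj] using h j (by omega)
    · simpa using h t.length (by omega)
  · rintro ⟨h, hi⟩ j hj
    rcases Nat.lt_succ_iff_lt_or_eq.1 hj with hj | rfl
    · simpa [List.getElem_append_left hj] using h j hj
    · simpa using hi

theorem nil_mem_Tc (c : ℕ → ℕ) : [] ∈ Tc c := fun i => i.elim0

theorem replicate_mem_Tc {c : ℕ → ℕ} (hc : ∀ n, 1 ≤ c n) (n : ℕ) : List.replicate n 0 ∈ Tc c :=
  fun i => by simpa [Nat.pos_iff_ne_zero, ← Nat.one_le_iff_ne_zero] using hc i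

theorem map_range_mem_Tc {c x : ℕ → ℕ} (hx : ∀ i, x i < c i) (n : ℕ) :
    (List.range n).map x ∈ Tc c :=
  fun i => by simpa using hx i

theorem image_children_inter_Tc {c : ℕ → ℕ} (a : List ℕ → ℕ) {t : List ℕ} (ht : t ∈ Tc c) :
    a '' ({s | ∃ i, i < c t.length ∧ s = t ++ [i]} ∩ Tc c) =
      (fun i => a (t ++ [i])) '' Iio (c t.length) := by
  ext q
  simp only [mem_image, mem_inter_iff, mem_ofPred_eq, mem_Iio]
  constructor
  · rintro ⟨_, ⟨⟨i, hi, rfl⟩, -⟩, rfl⟩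
    exact ⟨i, hi, rfl⟩
  · rintro ⟨i, hi, rfl⟩
    exact ⟨t ++ [i], ⟨⟨i, hi, rfl⟩, mem_Tc_append_singleton.2 ⟨ht, hi⟩⟩, rfl⟩

def extensionDerivative (hφ : Monotone φ) (M : ℕ) : Set (Set ℕ) →o Set (Set ℕ) where
  toFun G := {Y | φ Y ≤ M ∧ φ {p | insert p Y ∈ G} = ⊤}
  monotone' _ _ hG _ hY := ⟨hY.1, top_unique (hY.2 ▸ hφ fun _ hp => hG hp)⟩

theorem exists_rank_of_gfp_eq_empty (hφ : Monotone φ) {M : ℕ}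
    (h : OrderHom.gfp (extensionDerivative hφ M) = ∅) :
    ∃ (S : Set ℕ → Set ℕ) (r : Set ℕ → Ordinal.{0}),
      (∀ Y p, p ∉ S Y → r (insert p Y) < r Y) ∧ ∀ Y, φ Y ≤ M → φ (S Y) < ⊤ := by
  set D := extensionDerivative hφ M
  have key : ∀ Y, ∃ β, Y ∈ gfpApprox D ⊤ β ∧ Y ∉ D (gfpApprox D ⊤ β) := by
    intro Y
    have hex : {α | Y ∉ gfpApprox D ⊤ α}.Nonempty :=
      ⟨_, by rw [mem_ofPred_eq, gfpApprox_ord_eq_gfp, h]; exact notMem_empty Y⟩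
    obtain ⟨α, hα, hmin⟩ := wellFounded_lt.has_min _ hex
    rw [mem_ofPred_eq, gfpApprox] at hα
    simp only [top_inf_eq, iInf_eq_iInter, mem_iInter, not_forall] at hα
    obtain ⟨β, hβ, hY⟩ := hα
    exact ⟨β, not_not.1 fun hβY => hmin β hβY hβ, hY⟩
  choose β hβ using key
  refine ⟨fun Y => {p | insert p Y ∈ gfpApprox D ⊤ (β Y)}, β, fun Y p hp => ?_, fun Y hY => ?_⟩
  · by_contra! hle
    exact hp (gfpApprox_anti_right D hle (hβ _).1)
  · exact lt_top_iff_ne_top.2 fun htop => (hβ Y).2 ⟨hY, htop⟩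

theorem exists_finite_subset_subset_union {β α : Type*} [Preorder α] [WellFoundedLT α]
    (S : Set β → Set β) (r : Set β → α) (hr : ∀ Y p, p ∉ S Y → r (insert p Y) < r Y)
    (A Y : Set β) (hYA : Y ⊆ A) (hY : Y.Finite) :
    ∃ Y' ⊆ A, Y'.Finite ∧ A ⊆ Y' ∪ S Y' := by
  induction Y using (InvImage.wf r wellFounded_lt).induction with
  | h Y ih =>
    by_cases hA : A ⊆ Y ∪ S Y
    · exact ⟨Y, hYA, hY, hA⟩
    obtain ⟨p, hpA, hp⟩ := not_subset.1 hA
    rw [mem_union, not_or] at hp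
    exact ih (insert p Y) (hr Y p hp.2) (insert_subset hpA hYA) (hY.insert p)

theorem idealCountablyGenerated_of_exists_rank (hφ : IsSubmeasure φ)
    (h : ∀ M : ℕ, ∃ (S : Set ℕ → Set ℕ) (r : Set ℕ → Ordinal.{0}),
      (∀ Y p, p ∉ S Y → r (insert p Y) < r Y) ∧ ∀ Y, φ Y ≤ M → φ (S Y) < ⊤) :
    IdealCountablyGenerated {A : Set ℕ | φ A < ⊤} := by
  choose S r hr hS using h
  refine ⟨{A | φ A < ⊤} ∩ range fun q : ℕ × Finset ℕ => ↑q.2 ∪ S q.1 q.2,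
    (countable_range _).mono inter_subset_right, inter_subset_left, fun A hA => ?_⟩
  obtain ⟨M, hM⟩ := ENNReal.exists_nat_gt hA.ne
  obtain ⟨Y, hYA, hY, hAY⟩ :=
    exists_finite_subset_subset_union (S M) (r M) (hr M) A ∅ (empty_subset A) finite_empty
  have hlt : φ (Y ∪ S M Y) < ⊤ := (hφ.union_le _ _).trans_lt <| ENNReal.add_lt_top.2
    ⟨hφ.lt_top_of_finite hY, hS M Y ((hφ.monotone hYA).trans hM.le)⟩
  exact ⟨{Y ∪ S M Y}, singleton_subset_iff.2 ⟨hlt, (M, hY.toFinset), by simp⟩,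
    finite_singleton _, by simpa using hAY⟩

theorem exists_pairwiseDisjoint_finsets (hφ : IsSubmeasure φ) (hlsc : IsLscSubmeasure φ)
    {ι : Type*} (s : Finset ι) (Z : ι → Set ℕ) (hZ : ∀ i ∈ s, φ (Z i) = ⊤) {b : ℝ≥0∞}
    (hb : b ≠ ⊤) (U : Set ℕ) (hU : U.Finite) :
    ∃ c₀, ∀ c ≥ c₀, ∃ F : ι → Finset ℕ,
      (∀ i ∈ s, (F i).card = c ∧ ↑(F i) ⊆ Z i \ U ∧ b < φ (F i)) ∧
        (s : Set ι).PairwiseDisjoint F := by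
  classical
  induction s using Finset.induction_on generalizing U with
  | empty => exact ⟨0, fun c _ => ⟨fun _ => ∅, by simp, by simp⟩⟩
  | @insert i₀ s hi₀ ih =>
    have hZ₀ := hZ i₀ (Finset.mem_insert_self i₀ s)
    obtain ⟨F₀, hF₀Z, hF₀b⟩ := hlsc.exists_finset_subset_lt (Z := Z i₀ \ U)
      (hφ.diff_eq_top hZ₀ hU ▸ hb.lt_top)
    obtain ⟨c₁, hc₁⟩ := ih (fun i hi => hZ i (Finset.mem_insert_of_mem hi)) (U ∪ F₀)
      (hU.union F₀.finite_toSet)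
    refine ⟨max c₁ F₀.card, fun c hc => ?_⟩
    obtain ⟨F, hF, hdisj⟩ := hc₁ c (le_of_max_le_left hc)
    -- `F₀` is padded to size `c` by fresh points of `Z i₀`
    obtain ⟨P, hPZ, hPcard⟩ := ((hφ.infinite_of_eq_top hZ₀).sdiff
      ((hU.union F₀.finite_toSet).union (s.biUnion F).finite_toSet)).exists_subset_card_eq
      (c - F₀.card)
    have hP : ∀ p ∈ P, p ∈ Z i₀ ∧ p ∉ U ∧ p ∉ F₀ ∧ ∀ i ∈ s, p ∉ F i := fun p hp => by
      simpa [not_or, and_assoc] using hPZ hp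
    refine ⟨Function.update F i₀ (F₀ ∪ P), fun i hi => ?_, ?_⟩
    · rcases Finset.mem_insert.1 hi with rfl | hi
      · refine ⟨?_, ?_, ?_⟩
        · rw [Function.update_self, Finset.card_union_of_disjoint, hPcard]
          · omega
          · exact Finset.disjoint_right.2 fun p hp => (hP p hp).2.2.1
        · intro p hp
          simp only [Function.update_self, Finset.coe_union, mem_union, Finset.mem_coe] at hp
          rcases hp with hp | hp
          · exact hF₀Z hp
          · exact ⟨(hP p hp).1, (hP p hp).2.1⟩
        · rw [Function.update_self]
          exact hF₀b.trans_le (hφ.monotone (by simp))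
      · rw [Function.update_of_ne (ne_of_mem_of_not_mem hi hi₀)]
        obtain ⟨hcard, hsub, hlt⟩ := hF i hi
        exact ⟨hcard, hsub.trans (sdiff_subset_sdiff_right subset_union_left), hlt⟩
    · rw [Finset.coe_insert]
      refine (hdisj.mono_on fun i hi => ?_).insert_of_notMem hi₀ fun i hi => ?_
      · rw [Function.update_of_ne (ne_of_mem_of_not_mem hi hi₀)]
      · rw [Function.update_self, Function.update_of_ne (ne_of_mem_of_not_mem hi hi₀),
          Finset.disjoint_union_left]
        exact ⟨Finset.disjoint_right.2 fun p hp => ((hF i hi).2.1 hp).2 ∘ Or.inr,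
          Finset.disjoint_left.2 fun p hp => (hP p hp).2.2.2 i hi⟩

theorem Finset.image_nth_Iio_card (F : Finset ℕ) : Nat.nth (· ∈ F) '' Iio F.card = F := by
  simpa using Nat.image_nth_Iio_card (p := (· ∈ F)) F.finite_toSet

theorem Finset.injOn_nth_Iio_card (F : Finset ℕ) : InjOn (Nat.nth (· ∈ F)) (Iio F.card) := by
  simpa using Nat.nth_injOn (p := (· ∈ F)) F.finite_toSet

/-- Level `n` of the tree under construction; `bound` exceeds every point used on levels `≤ n`. -/
structure TreeLevel where
  nodes : Finset (List ℕ)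
  point : List ℕ → ℕ
  label : List ℕ → Set ℕ
  bound : ℕ

namespace TreeLevel

structure IsValid (G : Set (Set ℕ)) (L : TreeLevel) : Prop where
  injOn_point : InjOn L.point L.nodes
  point_lt_bound : ∀ t ∈ L.nodes, L.point t < L.bound
  label_mem : ∀ t ∈ L.nodes, L.label t ∈ G
  point_mem_label : ∀ t ∈ L.nodes, L.point t ∈ L.label t

def root (Y : Set ℕ) (p : ℕ) : TreeLevel := ⟨{[]}, fun _ => p, fun _ => Y, p + 1⟩

theorem isValid_root {G : Set (Set ℕ)} {Y : Set ℕ} {p : ℕ} (hY : Y ∈ G) (hp : p ∈ Y) :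
    (root Y p).IsValid G :=
  ⟨by simp [root], by simp [root], by simp [root, hY], by simp [root, hp]⟩

/-- The next level: the children of `t` are `t ++ [i]` for `i < w`, carrying the points of `F t`
in increasing order. -/
noncomputable def extend (L : TreeLevel) (w : ℕ) (F : List ℕ → Finset ℕ) : TreeLevel where
  nodes := Finset.image₂ (fun t i => t ++ [i]) L.nodes (Finset.range w)
  point u := Nat.nth (· ∈ F u.dropLast) (u.getLastD 0)
  label u := insert (Nat.nth (· ∈ F u.dropLast) (u.getLastD 0)) (L.label u.dropLast)
  bound := max L.bound (L.nodes.sup (fun t => (F t).sup id) + 1)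

variable {L : TreeLevel} {w : ℕ} {F : List ℕ → Finset ℕ} {G : Set (Set ℕ)} {b : ℝ≥0∞}

@[simp]
theorem extend_point_append (t : List ℕ) (i : ℕ) :
    (L.extend w F).point (t ++ [i]) = Nat.nth (· ∈ F t) i := by
  simp [extend]

@[simp]
theorem extend_label_append (t : List ℕ) (i : ℕ) :
    (L.extend w F).label (t ++ [i]) = insert (Nat.nth (· ∈ F t) i) (L.label t) := by
  simp [extend]

theorem mem_extend_nodes {u : List ℕ} :
    u ∈ (L.extend w F).nodes ↔ ∃ t ∈ L.nodes, ∃ i < w, t ++ [i] = u := by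
  simp [extend]

structure Admissible (φ : Set ℕ → ℝ≥0∞) (G : Set (Set ℕ)) (b : ℝ≥0∞) (w : ℕ) (L : TreeLevel)
    (F : List ℕ → Finset ℕ) : Prop where
  card_eq : ∀ t ∈ L.nodes, (F t).card = w
  subset : ∀ t ∈ L.nodes, ↑(F t) ⊆ {p | insert p (L.label t) ∈ G} \ Iio L.bound
  lt_phi : ∀ t ∈ L.nodes, b < φ (F t)
  pairwiseDisjoint : (L.nodes : Set (List ℕ)).PairwiseDisjoint F

namespace Admissible

theorem image_nth (hF : Admissible φ G b w L F) {t : List ℕ} (ht : t ∈ L.nodes) :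
    Nat.nth (· ∈ F t) '' Iio w = F t := by
  simpa [hF.card_eq t ht] using (F t).image_nth_Iio_card

theorem nth_mem (hF : Admissible φ G b w L F) {t : List ℕ} (ht : t ∈ L.nodes) {i : ℕ} (hi : i < w) :
    Nat.nth (· ∈ F t) i ∈ F t := by
  rw [← Finset.mem_coe, ← hF.image_nth ht]
  exact mem_image_of_mem _ hi

theorem bound_le_point (hF : Admissible φ G b w L F) {u : List ℕ} (hu : u ∈ (L.extend w F).nodes) :
    L.bound ≤ (L.extend w F).point u := by
  obtain ⟨t, ht, i, hi, rfl⟩ := mem_extend_nodes.1 hu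
  simpa using (hF.subset t ht (hF.nth_mem ht hi)).2

end Admissible

theorem Admissible.isValid_extend (hF : Admissible φ G b w L F) :
    (L.extend w F).IsValid G where
  injOn_point := by
    rintro _ hu₁ _ hu₂ heq
    obtain ⟨t₁, ht₁, i₁, hi₁, rfl⟩ := mem_extend_nodes.1 hu₁
    obtain ⟨t₂, ht₂, i₂, hi₂, rfl⟩ := mem_extend_nodes.1 hu₂
    simp only [extend_point_append] at heq
    obtain rfl : t₁ = t₂ := by
      by_contra hne
      exact Finset.disjoint_left.1 (hF.pairwiseDisjoint ht₁ ht₂ hne) (hF.nth_mem ht₁ hi₁)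
        (heq ▸ hF.nth_mem ht₂ hi₂)
    rw [(F t₁).injOn_nth_Iio_card (by simpa [hF.card_eq t₁ ht₁] using hi₁)
      (by simpa [hF.card_eq t₁ ht₁] using hi₂) heq]
  point_lt_bound := by
    intro u hu
    obtain ⟨t, ht, i, hi, rfl⟩ := mem_extend_nodes.1 hu
    have hle : Nat.nth (· ∈ F t) i ≤ L.nodes.sup (fun t => (F t).sup id) :=
      (Finset.le_sup (f := id) (hF.nth_mem ht hi)).trans
        (Finset.le_sup (f := fun t => (F t).sup id) ht)
    simp only [extend_point_append]
    exact Nat.lt_succ_of_le hle |>.trans_le (le_max_right _ _)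
  label_mem := by
    intro u hu
    obtain ⟨t, ht, i, hi, rfl⟩ := mem_extend_nodes.1 hu
    simpa using (hF.subset t ht (hF.nth_mem ht hi)).1
  point_mem_label := by
    intro u hu
    obtain ⟨t, ht, i, hi, rfl⟩ := mem_extend_nodes.1 hu
    simp

theorem exists_admissible (hφ : IsSubmeasure φ) (hlsc : IsLscSubmeasure φ)
    (hG : ∀ Y ∈ G, φ {p | insert p Y ∈ G} = ⊤) (hL : L.IsValid G) (hb : b ≠ ⊤) :
    ∃ w, 1 ≤ w ∧ ∃ F, Admissible φ G b w L F := by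
  obtain ⟨c₀, hc₀⟩ := exists_pairwiseDisjoint_finsets hφ hlsc L.nodes
    (fun t => {p | insert p (L.label t) ∈ G}) (fun t ht => hG _ (hL.label_mem t ht)) hb
    (Iio L.bound) (finite_Iio _)
  obtain ⟨F, hF, hdisj⟩ := hc₀ (max c₀ 1) (le_max_left _ _)
  exact ⟨max c₀ 1, le_max_right _ _, F, fun t ht => (hF t ht).1, fun t ht => (hF t ht).2.1,
    fun t ht => (hF t ht).2.2, hdisj⟩

end TreeLevel

structure IsLabelledTree (φ : Set ℕ → ℝ≥0∞) (G : Set (Set ℕ)) (c : ℕ → ℕ) (a : List ℕ → ℕ)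
    (Y : List ℕ → Set ℕ) : Prop where
  one_le : ∀ n, 1 ≤ c n
  injOn : InjOn a (Tc c)
  label_mem : ∀ t ∈ Tc c, Y t ∈ G
  mem_label : ∀ t ∈ Tc c, a t ∈ Y t
  label_subset : ∀ t ∈ Tc c, ∀ i < c t.length, Y t ⊆ Y (t ++ [i])
  lt_phi_children : ∀ t ∈ Tc c,
    (t.length + 1 : ℝ≥0∞) < φ ((fun i => a (t ++ [i])) '' Iio (c t.length))

structure IsTreeSeq (φ : Set ℕ → ℝ≥0∞) (G : Set (Set ℕ)) (L : ℕ → TreeLevel) (c : ℕ → ℕ)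
    (F : ℕ → List ℕ → Finset ℕ) : Prop where
  nodes_zero : (L 0).nodes = {[]}
  isValid_zero : (L 0).IsValid G
  succ_eq : ∀ n, L (n + 1) = (L n).extend (c n) (F n)
  admissible : ∀ n, (L n).Admissible φ G (n + 1) (c n) (F n)
  one_le : ∀ n, 1 ≤ c n

namespace IsTreeSeq

variable {G : Set (Set ℕ)} {L : ℕ → TreeLevel} {c : ℕ → ℕ} {F : ℕ → List ℕ → Finset ℕ}

theorem isValid (hL : IsTreeSeq φ G L c F) : ∀ n, (L n).IsValid G
  | 0 => hL.isValid_zero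
  | n + 1 => hL.succ_eq n ▸ (hL.admissible n).isValid_extend

theorem mem_nodes_iff (hL : IsTreeSeq φ G L c F) :
    ∀ {n : ℕ} {t : List ℕ}, t ∈ (L n).nodes ↔ t ∈ Tc c ∧ t.length = n
  | 0, t => by
    rw [hL.nodes_zero, Finset.mem_singleton, List.length_eq_zero_iff]
    exact ⟨fun h => ⟨h ▸ nil_mem_Tc c, h⟩, And.right⟩
  | n + 1, t => by
    rw [hL.succ_eq, TreeLevel.mem_extend_nodes]
    constructor
    · rintro ⟨s, hs, i, hi, rfl⟩
      obtain ⟨hsT, rfl⟩ := hL.mem_nodes_iff.1 hs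
      exact ⟨mem_Tc_append_singleton.2 ⟨hsT, hi⟩, by simp⟩
    · rintro ⟨htT, hlen⟩
      obtain ⟨s, i, rfl⟩ := (List.eq_nil_or_concat' t).resolve_left (by rintro rfl; simp at hlen)
      obtain ⟨hsT, hi⟩ := mem_Tc_append_singleton.1 htT
      obtain rfl : s.length = n := by simpa using hlen
      exact ⟨s, hL.mem_nodes_iff.2 ⟨hsT, rfl⟩, i, hi, rfl⟩

theorem bound_mono (hL : IsTreeSeq φ G L c F) : Monotone fun n => (L n).bound :=
  monotone_nat_of_le_succ fun n => hL.succ_eq n ▸ le_max_left _ _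

theorem point_lt_point (hL : IsTreeSeq φ G L c F) {m n : ℕ} {t t' : List ℕ} (hmn : m < n)
    (ht : t ∈ (L m).nodes) (ht' : t' ∈ (L n).nodes) : (L m).point t < (L n).point t' := by
  obtain ⟨k, rfl⟩ := Nat.exists_eq_add_of_lt hmn
  rw [hL.succ_eq] at ht' ⊢
  calc (L m).point t < (L m).bound := (hL.isValid m).point_lt_bound t ht
    _ ≤ (L (m + k)).bound := hL.bound_mono (Nat.le_add_right m k)
    _ ≤ _ := (hL.admissible _).bound_le_point ht'

theorem eq_of_point_eq (hL : IsTreeSeq φ G L c F) {m n : ℕ} {t t' : List ℕ}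
    (ht : t ∈ (L m).nodes) (ht' : t' ∈ (L n).nodes) (h : (L m).point t = (L n).point t') :
    t = t' := by
  rcases lt_trichotomy m n with hmn | rfl | hmn
  · exact absurd h (hL.point_lt_point hmn ht ht').ne
  · exact (hL.isValid m).injOn_point ht ht' h
  · exact absurd h (hL.point_lt_point hmn ht' ht).ne'

theorem isLabelledTree (hL : IsTreeSeq φ G L c F) :
    IsLabelledTree φ G c (fun t => (L t.length).point t) (fun t => (L t.length).label t) where
  one_le := hL.one_le
  injOn _ ht _ ht' := hL.eq_of_point_eq (hL.mem_nodes_iff.2 ⟨ht, rfl⟩)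
    (hL.mem_nodes_iff.2 ⟨ht', rfl⟩)
  label_mem t ht := (hL.isValid _).label_mem t (hL.mem_nodes_iff.2 ⟨ht, rfl⟩)
  mem_label t ht := (hL.isValid _).point_mem_label t (hL.mem_nodes_iff.2 ⟨ht, rfl⟩)
  label_subset t _ i _ := by simp [hL.succ_eq]
  lt_phi_children t ht := by
    have hchildren :
        (fun i => (L (t ++ [i]).length).point (t ++ [i])) = Nat.nth (· ∈ F t.length t) := by
      funext i
      simp [hL.succ_eq]
    rw [hchildren, (hL.admissible _).image_nth (hL.mem_nodes_iff.2 ⟨ht, rfl⟩)]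
    exact (hL.admissible _).lt_phi t (hL.mem_nodes_iff.2 ⟨ht, rfl⟩)

end IsTreeSeq

theorem exists_isTreeSeq {G : Set (Set ℕ)} (hφ : IsSubmeasure φ) (hlsc : IsLscSubmeasure φ)
    (hG : ∀ Y ∈ G, φ {p | insert p Y ∈ G} = ⊤) (hne : G.Nonempty) :
    ∃ L c F, IsTreeSeq φ G L c F := by
  obtain ⟨Y₀, hY₀⟩ := hne
  obtain ⟨p, hp⟩ := (hφ.infinite_of_eq_top (hG Y₀ hY₀)).nonempty
  have step : ∀ (n : ℕ) (L : TreeLevel),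
      ∃ w F, L.IsValid G → 1 ≤ w ∧ L.Admissible φ G (n + 1) w F := by
    intro n L
    by_cases hL : L.IsValid G
    · obtain ⟨w, hw, F, hF⟩ := TreeLevel.exists_admissible hφ hlsc hG hL (b := n + 1) (by simp)
      exact ⟨w, F, fun _ => ⟨hw, hF⟩⟩
    · exact ⟨0, fun _ => ∅, fun h => absurd h hL⟩
  choose w F hwF using step
  let L : ℕ → TreeLevel := fun n =>
    Nat.rec (TreeLevel.root (insert p Y₀) p) (fun n L => L.extend (w n L) (F n L)) n
  have hvalid : ∀ n, (L n).IsValid G := fun n => by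
    induction n with
    | zero => exact TreeLevel.isValid_root hp (mem_insert p Y₀)
    | succ n ih => exact (hwF n _ ih).2.isValid_extend
  exact ⟨L, fun n => w n (L n), fun n => F n (L n), rfl, hvalid 0, fun n => rfl,
    fun n => (hwF n _ (hvalid n)).2, fun n => (hwF n _ (hvalid n)).1⟩

namespace IsLabelledTree

variable {G : Set (Set ℕ)} {c : ℕ → ℕ} {a : List ℕ → ℕ} {Y : List ℕ → Set ℕ}

theorem phi_image_eq_top (hT : IsLabelledTree φ G c a Y) (hφ : Monotone φ) :
    φ (a '' Tc c) = ⊤ := by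
  by_contra h
  obtain ⟨n, hn⟩ := ENNReal.exists_nat_gt h
  have ht := replicate_mem_Tc hT.one_le n
  have hsub : (fun i => a (List.replicate n 0 ++ [i])) '' Iio (c n) ⊆ a '' Tc c := by
    rintro _ ⟨i, hi, rfl⟩
    exact mem_image_of_mem a (mem_Tc_append_singleton.2 ⟨ht, by simpa using hi⟩)
  have hlt := (hT.lt_phi_children _ ht).trans_le (hφ (by simpa using hsub))
  simp only [List.length_replicate] at hlt
  exact (hn.trans (ENNReal.lt_add_right (by simp) one_ne_zero)).trans hlt |>.false

theorem phi_image_branchOf_le (hT : IsLabelledTree φ G c a Y) (hφ : Monotone φ)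
    (hlsc : IsLscSubmeasure φ) {M : ℝ≥0∞} (hGM : ∀ Y ∈ G, φ Y ≤ M) {x : ℕ → ℕ}
    (hx : ∀ i, x i < c i) : φ (a '' (branchOf x ∩ Tc c)) ≤ M := by
  set X : ℕ → List ℕ := fun n => (List.range n).map x
  have hX : ∀ n, X n ∈ Tc c := map_range_mem_Tc hx
  have hmono : Monotone fun n => Y (X n) := monotone_nat_of_le_succ fun n => by
    have hsucc : X (n + 1) = X n ++ [x n] := by simp [X, List.range_succ]
    rw [hsucc]
    exact hT.label_subset _ (hX n) _ (by simpa [X] using hx n)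
  refine (hφ ?_).trans
    (hlsc.iUnion_le_of_monotone hφ hmono fun n => hGM _ (hT.label_mem _ (hX n)))
  rintro _ ⟨_, ⟨⟨n, rfl⟩, -⟩, rfl⟩
  exact mem_iUnion.2 ⟨n, hT.mem_label _ (hX n)⟩

end IsLabelledTree

theorem exists_tree_structure_of_not_ctblyGen_general (φ : Set ℕ → ENNReal)
    (hφ : IsSubmeasure φ) (hlsc : IsLscSubmeasure φ)
    (hng : ¬ IdealCountablyGenerated {A : Set ℕ | φ A < ⊤}) :
    ∃ (A : Set ℕ) (c : ℕ → ℕ) (f : ↥A → List ℕ),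
      φ A = ⊤ ∧
      (∀ n : ℕ, 1 ≤ c n) ∧
      Function.Injective f ∧ Set.range f = Tc c ∧
      (∀ (n : ℕ) (t : List ℕ), t ∈ Tc c → t.length = n →
        (n + 1 : ENNReal) <
          φ (Subtype.val '' (f ⁻¹' {s : List ℕ | ∃ i : ℕ, i < c n ∧ s = t ++ [i]}))) ∧
      (∀ x : ℕ → ℕ, (∀ i : ℕ, x i < c i) →
        φ (Subtype.val '' (f ⁻¹' branchOf x)) < ⊤) := by
  obtain ⟨M, hM⟩ : ∃ M : ℕ, (OrderHom.gfp (extensionDerivative hφ.monotone M)).Nonempty := by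
    by_contra! h
    exact hng (idealCountablyGenerated_of_exists_rank hφ fun M =>
      exists_rank_of_gfp_eq_empty hφ.monotone (h M))
  set G := OrderHom.gfp (extensionDerivative hφ.monotone M)
  have hG : ∀ Y ∈ G, φ Y ≤ M ∧ φ {p | insert p Y ∈ G} = ⊤ := fun Y hY =>
    (OrderHom.map_gfp (extensionDerivative hφ.monotone M)).symm.subset hY
  obtain ⟨L, c, F, hL⟩ := exists_isTreeSeq hφ hlsc (fun Y hY => (hG Y hY).2) hM
  have hT := hL.isLabelledTree
  obtain ⟨f, hf, hrange, hpre⟩ := hT.injOn.exists_injective_range_eq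
  refine ⟨_, c, f, hT.phi_image_eq_top hφ.monotone, hT.one_le, hf, hrange,
    fun n t ht hn => ?_, fun x hx => ?_⟩
  · rw [hpre, ← hn, image_children_inter_Tc _ ht]
    exact hT.lt_phi_children t ht
  · rw [hpre]
    exact (hT.phi_image_branchOf_le hφ.monotone hlsc (fun Y hY => (hG Y hY).1) hx).trans_lt
      ENNReal.coe_lt_top

/-- If `φ` is an lsc submeasure with `φ(ω) = ∞` such that `Fin(φ)` is not countably
generated, then there are `A ∉ Fin(φ)`, `c ∈ ω^ω` with `c(n) ≥ 1`, and a bijection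
`f : A → T_c` such that (i) `φ(f⁻¹[{t⌢(i) : i < c(n)}]) > n+1` for every `t ∈ T_c` of
length `n`, and (ii) `f⁻¹[A_x] ∈ Fin(φ)` for every branch `x` of `T_c`. -/
theorem exists_tree_structure_of_not_ctblyGen (φ : Set ℕ → ENNReal)
    (hφ : IsSubmeasure φ) (hlsc : IsLscSubmeasure φ) (htop : φ Set.univ = ⊤)
    (hng : ¬ IdealCountablyGenerated {A : Set ℕ | φ A < ⊤}) :
    ∃ (A : Set ℕ) (c : ℕ → ℕ) (f : ↥A → List ℕ),
      φ A = ⊤ ∧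
      (∀ n : ℕ, 1 ≤ c n) ∧
      Function.Injective f ∧ Set.range f = Tc c ∧
      (∀ (n : ℕ) (t : List ℕ), t ∈ Tc c → t.length = n →
        (n + 1 : ENNReal) <
          φ (Subtype.val '' (f ⁻¹' {s : List ℕ | ∃ i : ℕ, i < c n ∧ s = t ++ [i]}))) ∧
      (∀ x : ℕ → ℕ, (∀ i : ℕ, x i < c i) →
        φ (Subtype.val '' (f ⁻¹' branchOf x)) < ⊤) :=
  exists_tree_structure_of_not_ctblyGen_general φ hφ hlsc hng
end

section
/- An ideal I on ω is Egorov if and only if the restriction I↾A is an Egorov ideal for every A ∈ I⁺. -/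
open MeasureTheory Set

/-- An ideal `I` on `ω` is Egorov iff `I↾A` is Egorov for every `A ∈ I⁺`. -/
theorem egorov_iff_forall_restrict_egorov (I : Set (Set ℕ)) (hI : IsIdeal I) :
    IsEgorov I ↔ ∀ A : Set ℕ, A ∉ I → IsEgorov (restrictIdeal I A) := by

  obtain ⟨hun, hdown, hfin, huniv⟩ := hI
  constructor
  · intro hE A hA f g hf hg hconv η hη
    classical
    set F : ℕ → ℝ → ℝ := fun n => if h : n ∈ A then f ⟨n, h⟩ else g with hF
    have hFmeas : ∀ n, AEMeasurable (F n) (volume.restrict (Icc (0:ℝ) 1)) := by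
      intro n
      by_cases h : n ∈ A
      · simpa [hF, h] using hf ⟨n, h⟩
      · simpa [hF, h] using hg
    have hFconv : IConvPtwise I F g := by
      intro t ht ε hε
      have hsub : {n : ℕ | ε ≤ |F n t - g t|} ⊆ Subtype.val '' {a : ↥A | ε ≤ |f a t - g t|} := by
        intro n hn
        by_cases h : n ∈ A
        · exact ⟨⟨n, h⟩, by simpa [hF, h] using hn, rfl⟩
        · exfalso
          simp only [hF, h, dif_neg, not_false_iff, Set.mem_setOf_eq, sub_self, abs_zero] at hn
          linarith
      exact hdown _ _ hsub (hconv t ht ε hε)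
    obtain ⟨M, hM1, hM2, hM3, hM4⟩ := hE F g hFmeas hg hFconv η hη
    refine ⟨M, hM1, hM2, hM3, ?_⟩
    intro ε hε
    have h4 := hM4 ε hε
    have hsub : Subtype.val '' {a : ↥A | ∃ t ∈ M, ε ≤ |f a t - g t|}
        ⊆ {n : ℕ | ∃ t ∈ M, ε ≤ |F n t - g t|} := by
      rintro n ⟨a, ha, rfl⟩
      obtain ⟨t, htM, hts⟩ := ha
      exact ⟨t, htM, by simpa [hF, a.2] using hts⟩
    exact hdown _ _ hsub h4
  · intro h f g hf hg hconv η hη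
    have hE := h Set.univ huniv
    have key : ∀ P : ℕ → Prop,
        Subtype.val '' {a : ↥(Set.univ : Set ℕ) | P a.val} = {n | P n} := by
      intro P; ext n; constructor
      · rintro ⟨a, ha, rfl⟩; exact ha
      · intro hn; exact ⟨⟨n, trivial⟩, hn, rfl⟩
    have hconv' : IConvPtwise (restrictIdeal I Set.univ) (fun a => f a.val) g := by
      intro t ht ε hε
      show Subtype.val '' _ ∈ I
      rw [key (fun n => ε ≤ |f n t - g t|)]
      exact hconv t ht ε hε
    obtain ⟨M, hM1, hM2, hM3, hM4⟩ :=
      hE (fun a => f a.val) g (fun a => hf a.val) hg hconv' η hη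
    refine ⟨M, hM1, hM2, hM3, ?_⟩
    intro ε hε
    have h4 := hM4 ε hε
    simp only [restrictIdeal, Set.mem_setOf_eq] at h4
    rwa [key (fun n => ∃ t ∈ M, ε ≤ |f n t - g t|)] at h4
end

section
/- An ideal I on ω is Egorov if and only if for every sequence (X_n)_{n∈ω} of Lebesgue-measurable subsets of [0,1] such that the sequence of characteristic functions (χ_{X_n}) is I-pointwise convergent to 0, there is a Lebesgue-measurable set M ⊆ [0,1] with λ(M) ≤ 1/2 such that {n ∈ ω : X_n ⊄ M} ∈ I. -/
open MeasureTheory Set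

/-!
The direction from Egorov is immediate: take the complement of a set of `I`-uniform
convergence for `η = 1/2`.

Conversely, the condition with bound `1/2` improves itself to every bound `β > 0`. If `I`-almost
all `X n` lie in `A` with `λ(A) ≤ 1/2`, then `ψ t = 2 λ(A ∩ (-∞, t])` maps `A` into `[0,1]` and
halves measures on `A`. Off the null set where `ψ` is flat to the left, a generalized inverse
`θ` of `ψ` inverts it on `A`, so the sets `θ⁻¹(X n)` still `I`-converge to `0`; a cover of
them of measure `β` pulls back along `ψ` to a cover of the `X n` of measure `β/2`.
Finally, covers of measure `ε k` with `∑ ε k < η` for the sets `{t | 1/(k+1) ≤ |f n t - g t|}`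
leave a complement on which `(f n)` converges `I`-uniformly.
-/

open ENNReal

namespace IsIdeal

variable {ι : Type} {I : Set (Set ι)}

lemma mono (hI : IsIdeal I) {A B : Set ι} (hB : B ∈ I) (hAB : A ⊆ B) : A ∈ I :=
  hI.2.1 A B hAB hB

lemma union_mem (hI : IsIdeal I) {A B : Set ι} (hA : A ∈ I) (hB : B ∈ I) : A ∪ B ∈ I :=
  hI.1 A B hA hB

lemma empty_mem (hI : IsIdeal I) : ∅ ∈ I :=
  hI.2.2.1 ∅ finite_empty

end IsIdeal

lemma iConvPtwise_indicator_one_zero {ι : Type} {I : Set (Set ι)} (hI : IsIdeal I)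
    {X : ι → Set ℝ} (hX : ∀ t ∈ Icc (0:ℝ) 1, {n | t ∈ X n} ∈ I) :
    IConvPtwise I (fun n => (X n).indicator fun _ => (1:ℝ)) fun _ => 0 := by
  intro t ht ε hε
  refine hI.mono (hX t ht) fun n hn => ?_
  rw [mem_ofPred_eq]
  by_contra hnot
  simp only [mem_ofPred_eq, indicator_of_notMem hnot, sub_zero, abs_zero] at hn
  linarith

noncomputable def doubledCdf (A : Set ℝ) (t : ℝ) : ℝ := 2 * (volume (A ∩ Iic t)).toReal

namespace doubledCdf

variable {A : Set ℝ}

lemma nonneg (t : ℝ) : 0 ≤ doubledCdf A t := by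
  unfold doubledCdf
  positivity

variable (hA : A ⊆ Icc (0:ℝ) 1)
include hA

lemma volume_inter_ne_top (s : Set ℝ) : volume (A ∩ s) ≠ ∞ :=
  measure_ne_top_of_subset (inter_subset_left.trans hA) measure_Icc_lt_top.ne

lemma ofReal_half (t : ℝ) : ENNReal.ofReal (doubledCdf A t / 2) = volume (A ∩ Iic t) := by
  rw [doubledCdf, mul_div_cancel_left₀ _ two_ne_zero, ofReal_toReal (volume_inter_ne_top hA _)]

lemma monotone : Monotone (doubledCdf A) := fun _ _ hst =>
  mul_le_mul_of_nonneg_left (toReal_mono (volume_inter_ne_top hA _)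
    (measure_mono (inter_subset_inter_right _ (Iic_subset_Iic.2 hst)))) zero_le_two

lemma le_apply_one (t : ℝ) : doubledCdf A t ≤ doubledCdf A 1 :=
  mul_le_mul_of_nonneg_left (toReal_mono (volume_inter_ne_top hA _)
    (measure_mono fun _ hx => ⟨hx.1, (hA hx.1).2⟩)) zero_le_two

lemma mem_Icc (hAvol : volume A ≤ 2⁻¹) (t : ℝ) : doubledCdf A t ∈ Icc (0:ℝ) 1 := by
  refine ⟨nonneg t, (le_apply_one hA t).trans ?_⟩
  have h : ENNReal.ofReal (doubledCdf A 1 / 2) ≤ ENNReal.ofReal (1 / 2) := by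
    rw [ofReal_half hA, one_div, ofReal_inv_of_pos two_pos, ofReal_ofNat]
    exact (measure_mono inter_subset_left).trans hAvol
  have := (ofReal_le_ofReal_iff (by norm_num)).1 h
  linarith

lemma apply_zero : doubledCdf A 0 = 0 := by
  have h : volume (A ∩ Iic 0) = 0 :=
    measure_mono_null (fun x hx => le_antisymm hx.2 (hA hx.1).1) (measure_singleton 0)
  simp [doubledCdf, h]

lemma volume_inter_Ioc (a b : ℝ) :
    volume (A ∩ Ioc a b) = ENNReal.ofReal ((doubledCdf A b - doubledCdf A a) / 2) := by
  rcases le_or_gt a b with hab | hba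
  · have hsplit : volume (A ∩ Iic a) + volume (A ∩ Ioc a b) = volume (A ∩ Iic b) := by
      rw [← measure_inter_add_sdiff (A ∩ Iic b) measurableSet_Iic, inter_assoc, Iic_inter_Iic,
        min_eq_right hab, inter_sdiff_assoc, Iic_sdiff_Iic]
    have hreal : (doubledCdf A b - doubledCdf A a) / 2 = (volume (A ∩ Ioc a b)).toReal := by
      simp only [doubledCdf, ← hsplit,
        toReal_add (volume_inter_ne_top hA _) (volume_inter_ne_top hA _)]
      ring
    rw [hreal, ofReal_toReal (volume_inter_ne_top hA _)]
  · rw [Ioc_eq_empty_of_le hba.le, inter_empty, measure_empty, eq_comm, ofReal_eq_zero]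
    have := monotone hA hba.le
    linarith

lemma lipschitzWith : LipschitzWith 2 (doubledCdf A) := by
  refine LipschitzWith.of_le_add_mul 2 fun s t => ?_
  rcases le_total s t with hst | hts
  · have := monotone hA hst
    have := dist_nonneg (x := s) (y := t)
    push_cast
    linarith
  · have h : volume (A ∩ Ioc t s) ≤ ENNReal.ofReal (s - t) :=
      (measure_mono inter_subset_right).trans_eq Real.volume_Ioc
    rw [volume_inter_Ioc hA, ofReal_le_ofReal_iff (sub_nonneg.2 hts)] at h
    rw [Real.dist_eq, abs_of_nonneg (sub_nonneg.2 hts)]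
    push_cast
    linarith

lemma continuous : Continuous (doubledCdf A) :=
  (lipschitzWith hA).continuous

lemma volume_inter_flat (w : ℝ) :
    volume (A ∩ {t | w < t ∧ doubledCdf A t = doubledCdf A w}) = 0 := by
  set S := A ∩ {t | w < t ∧ doubledCdf A t = doubledCdf A w}
  rcases S.eq_empty_or_nonempty with hS | hS
  · rw [hS, measure_empty]
  have hbdd : BddAbove S := bddAbove_Icc.mono (inter_subset_left.trans hA)
  have hsup : doubledCdf A (sSup S) = doubledCdf A w :=
    closure_minimal (fun t ht => ht.2.2) (isClosed_eq (continuous hA) continuous_const)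
      (csSup_mem_closure hS hbdd)
  have hsub : S ⊆ A ∩ Ioc w (sSup S) := fun t ht => ⟨ht.1, ht.2.1, le_csSup hbdd ht⟩
  refine measure_mono_null hsub ?_
  rw [volume_inter_Ioc hA, hsup, sub_self, zero_div, ofReal_zero]

lemma volume_inter_exists_flat :
    volume (A ∩ {t | ∃ u < t, doubledCdf A u = doubledCdf A t}) = 0 := by
  refine measure_mono_null ?_ (measure_iUnion_null fun q : ℚ => volume_inter_flat hA q)
  rintro t ⟨htA, u, hut, hu⟩
  obtain ⟨q, huq, hqt⟩ := exists_rat_btwn hut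
  have := monotone hA huq.le
  have := monotone hA hqt.le
  exact mem_iUnion.2 ⟨q, htA, hqt, by linarith⟩

lemma volume_inter_preimage_Iic (c : ℝ) :
    volume (A ∩ doubledCdf A ⁻¹' Iic c) = ENNReal.ofReal (min c (doubledCdf A 1) / 2) := by
  rcases lt_or_ge c 0 with hc | hc
  · have hempty : A ∩ doubledCdf A ⁻¹' Iic c = ∅ :=
      eq_empty_of_forall_notMem fun t ht => (nonneg t).not_gt (lt_of_le_of_lt ht.2 hc)
    rw [hempty, measure_empty, eq_comm, ofReal_eq_zero]
    have := min_le_left c (doubledCdf A 1)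
    linarith
  obtain ⟨s, -, hs⟩ : ∃ s ∈ Icc (0:ℝ) 1, doubledCdf A s = min c (doubledCdf A 1) :=
    intermediate_value_Icc zero_le_one (continuous hA).continuousOn
      ⟨(apply_zero hA).trans_le (le_min hc (nonneg 1)), min_le_right _ _⟩
  have hcover : A ∩ doubledCdf A ⁻¹' Iic c ⊆
      A ∩ Iic s ∪ A ∩ {t | s < t ∧ doubledCdf A t = doubledCdf A s} := by
    rintro t ⟨htA, htc⟩
    rcases le_or_gt t s with hts | hst
    · exact Or.inl ⟨htA, hts⟩
    · refine Or.inr ⟨htA, hst, le_antisymm ?_ (monotone hA hst.le)⟩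
      rw [hs]
      exact le_min htc (le_apply_one hA t)
  rw [← hs, ofReal_half hA]
  refine le_antisymm ?_ (measure_mono fun t ht => ⟨ht.1, ?_⟩)
  · calc volume (A ∩ doubledCdf A ⁻¹' Iic c)
        ≤ volume (A ∩ Iic s) + volume (A ∩ {t | s < t ∧ doubledCdf A t = doubledCdf A s}) :=
          (measure_mono hcover).trans (measure_union_le _ _)
      _ = volume (A ∩ Iic s) := by rw [volume_inter_flat hA, add_zero]
  · exact (monotone hA ht.2).trans (hs.trans_le (min_le_left _ _))

lemma map_volume_restrict :
    (volume.restrict A).map (doubledCdf A) =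
      (2⁻¹ : ℝ≥0∞) • volume.restrict (Icc 0 (doubledCdf A 1)) := by
  have hm : Measurable (doubledCdf A) := (monotone hA).measurable
  have : IsFiniteMeasure (volume.restrict A) :=
    isFiniteMeasure_restrict.2 (measure_ne_top_of_subset hA measure_Icc_lt_top.ne)
  refine Measure.ext_of_Iic _ _ fun c => ?_
  have hIcc : Iic c ∩ Icc 0 (doubledCdf A 1) = Icc 0 (min c (doubledCdf A 1)) := by
    ext x
    simp only [mem_inter_iff, mem_Iic, Set.mem_Icc, le_min_iff]
    tauto
  rw [Measure.map_apply hm measurableSet_Iic, Measure.restrict_apply (hm measurableSet_Iic),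
    inter_comm, volume_inter_preimage_Iic hA, Measure.smul_apply,
    Measure.restrict_apply measurableSet_Iic, hIcc, Real.volume_Icc, smul_eq_mul,
    sub_zero, ofReal_div_of_pos two_pos, ofReal_ofNat, ENNReal.div_eq_inv_mul]

lemma volume_inter_preimage_le {B : Set ℝ} (hB : MeasurableSet B) :
    volume (A ∩ doubledCdf A ⁻¹' B) ≤ 2⁻¹ * volume B := by
  have hm : Measurable (doubledCdf A) := (monotone hA).measurable
  rw [inter_comm, ← Measure.restrict_apply (hm hB), ← Measure.map_apply hm hB,
    map_volume_restrict hA, Measure.smul_apply, smul_eq_mul]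
  gcongr
  exact Measure.restrict_le_self

end doubledCdf

/-- The point `1` is inserted so that the infimum is never taken over the empty set (where
`sInf` is junk), which keeps `lowerInverse ψ` monotone with values in `[0,1]`. -/
noncomputable def lowerInverse (ψ : ℝ → ℝ) (s : ℝ) : ℝ :=
  sInf (insert 1 {u ∈ Icc (0:ℝ) 1 | s ≤ ψ u})

namespace lowerInverse

variable (ψ : ℝ → ℝ)

lemma insert_one_subset_Icc (s : ℝ) : insert 1 {u ∈ Icc (0:ℝ) 1 | s ≤ ψ u} ⊆ Icc 0 1 :=
  insert_subset_iff.2 ⟨right_mem_Icc.2 zero_le_one, fun _ hu => hu.1⟩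

lemma mem_Icc (s : ℝ) : lowerInverse ψ s ∈ Icc (0:ℝ) 1 :=
  ⟨le_csInf (insert_nonempty _ _) fun _ hu => (insert_one_subset_Icc ψ s hu).1,
    csInf_le (bddBelow_Icc.mono (insert_one_subset_Icc ψ s)) (mem_insert 1 _)⟩

lemma monotone : Monotone (lowerInverse ψ) := fun _ _ hst =>
  csInf_le_csInf (bddBelow_Icc.mono (insert_one_subset_Icc ψ _)) (insert_nonempty _ _)
    (insert_subset_insert fun _ hu => ⟨hu.1, hst.trans hu.2⟩)

variable {ψ}

lemma apply_eq (hψ : Monotone ψ) {t : ℝ} (ht : t ∈ Icc (0:ℝ) 1)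
    (hflat : ∀ u < t, ψ u ≠ ψ t) : lowerInverse ψ (ψ t) = t := by
  refine le_antisymm (csInf_le (bddBelow_Icc.mono (insert_one_subset_Icc ψ _))
    (mem_insert_of_mem _ ⟨ht, le_rfl⟩)) (le_csInf (insert_nonempty _ _) ?_)
  rintro u (rfl | ⟨-, htu⟩)
  · exact ht.2
  · by_contra! hut
    exact hflat u hut (le_antisymm (hψ hut.le) htu)

end lowerInverse

def HasSmallCovers {ι : Type} (I : Set (Set ι)) (β : ℝ≥0∞) : Prop :=
  ∀ X : ι → Set ℝ, (∀ n, X n ⊆ Icc (0:ℝ) 1) → (∀ n, MeasurableSet (X n)) →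
    (∀ t ∈ Icc (0:ℝ) 1, {n | t ∈ X n} ∈ I) →
    ∃ M ⊆ Icc (0:ℝ) 1, volume M ≤ β ∧ {n | ¬ X n ⊆ M} ∈ I

namespace HasSmallCovers

variable {ι : Type} {I : Set (Set ι)} {β : ℝ≥0∞}

lemma one (hI : IsIdeal I) : HasSmallCovers I 1 := fun _ hX _ _ =>
  ⟨Icc 0 1, subset_rfl, by simp [Real.volume_Icc], hI.mono hI.empty_mem fun n hn => hn (hX n)⟩

lemma mono {α : ℝ≥0∞} (h : HasSmallCovers I α) (hαβ : α ≤ β) : HasSmallCovers I β :=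
  fun X hX hXm hXI =>
    let ⟨M, hM, hMvol, hbad⟩ := h X hX hXm hXI
    ⟨M, hM, hMvol.trans hαβ, hbad⟩

lemma half_mul (hI : IsIdeal I) (h₂ : HasSmallCovers I 2⁻¹) (hβ : HasSmallCovers I β) :
    HasSmallCovers I (2⁻¹ * β) := by
  intro X hX hXm hXI
  obtain ⟨A, hA, hAvol, hbad₁⟩ := h₂ X hX hXm hXI
  set ψ := doubledCdf A
  set θ := lowerInverse ψ
  obtain ⟨B₀, -, hB₀vol, hbad₂⟩ := hβ (fun n => θ ⁻¹' X n ∩ Icc 0 1)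
    (fun n => inter_subset_right)
    (fun n => ((lowerInverse.monotone ψ).measurable (hXm n)).inter measurableSet_Icc)
    (fun s _ => hI.mono (hXI (θ s) (lowerInverse.mem_Icc ψ s)) fun _ hn => hn.1)
  set B := toMeasurable volume B₀
  set E := A ∩ {t | ∃ u < t, ψ u = ψ t}
  refine ⟨A ∩ ψ ⁻¹' B ∪ E, union_subset (inter_subset_left.trans hA)
    (inter_subset_left.trans hA), ?_, ?_⟩
  · calc volume (A ∩ ψ ⁻¹' B ∪ E) ≤ volume (A ∩ ψ ⁻¹' B) + volume E := measure_union_le _ _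
      _ = volume (A ∩ ψ ⁻¹' B) := by rw [doubledCdf.volume_inter_exists_flat hA, add_zero]
      _ ≤ 2⁻¹ * volume B :=
          doubledCdf.volume_inter_preimage_le hA (measurableSet_toMeasurable _ _)
      _ ≤ 2⁻¹ * β := by rw [measure_toMeasurable]; gcongr
  · refine hI.mono (hI.union_mem hbad₁ hbad₂) fun n hn => ?_
    simp only [mem_union, mem_ofPred_eq] at hn ⊢
    by_contra! hcov
    refine hn fun t ht => ?_
    have htA := hcov.1 ht
    by_cases hflat : ∃ u < t, ψ u = ψ t
    · exact Or.inr ⟨htA, hflat⟩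
    have hθ : θ (ψ t) = t := lowerInverse.apply_eq (doubledCdf.monotone hA) (hA htA)
      fun u hut hu => hflat ⟨u, hut, hu⟩
    refine Or.inl ⟨htA, subset_toMeasurable _ _ (hcov.2 ⟨?_, ?_⟩)⟩
    · rwa [mem_preimage, hθ]
    · exact doubledCdf.mem_Icc hA hAvol t

lemma of_ne_zero (hI : IsIdeal I) (h₂ : HasSmallCovers I 2⁻¹) (hβ : β ≠ 0) :
    HasSmallCovers I β := by
  have hpow : ∀ k : ℕ, HasSmallCovers I (2⁻¹ ^ k) := by
    intro k
    induction k with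
    | zero => simpa using one hI
    | succ k ih => simpa only [pow_succ'] using half_mul hI h₂ ih
  obtain ⟨k, hk⟩ := ENNReal.exists_inv_two_pow_lt hβ
  exact (hpow k).mono hk.le

lemma exists_of_nullMeasurable [Countable ι] (hI : IsIdeal I) (h : HasSmallCovers I β)
    {X : ι → Set ℝ} (hX : ∀ n, X n ⊆ Icc (0:ℝ) 1) (hXm : ∀ n, NullMeasurableSet (X n))
    (hXI : ∀ t ∈ Icc (0:ℝ) 1, {n | t ∈ X n} ∈ I) :
    ∃ M ⊆ Icc (0:ℝ) 1, volume M ≤ β ∧ {n | ¬ X n ⊆ M} ∈ I := by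
  choose K hKX hKm hKae using fun n => (hXm n).exists_measurable_subset_ae_eq
  obtain ⟨M, hM, hMvol, hbad⟩ := h K (fun n => (hKX n).trans (hX n)) hKm
    fun t ht => hI.mono (hXI t ht) fun n hn => hKX n hn
  set N := ⋃ n, X n \ K n
  have hN : volume N = 0 := measure_iUnion_null fun n => (ae_eq_set.1 (hKae n)).2
  refine ⟨M ∪ N, union_subset hM (iUnion_subset fun n => sdiff_subset.trans (hX n)), ?_,
    hI.mono hbad fun n hn hKM => hn fun t ht => ?_⟩
  · calc volume (M ∪ N) ≤ volume M + volume N := measure_union_le _ _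
      _ ≤ β := by rw [hN, add_zero]; exact hMvol
  · by_cases htK : t ∈ K n
    · exact Or.inl (hKM htK)
    · exact Or.inr (mem_iUnion.2 ⟨n, ht, htK⟩)

end HasSmallCovers

lemma isEgorov_of_hasSmallCovers {ι : Type} [Countable ι] {I : Set (Set ι)} (hI : IsIdeal I)
    (h : ∀ β ≠ 0, HasSmallCovers I β) : IsEgorov I := by
  intro f g hf hg hfg η hη
  obtain ⟨ε, hε, hεη⟩ := ENNReal.exists_pos_sum_of_countable (ofReal_pos.2 hη).ne' ℕ
  let X : ℕ → ι → Set ℝ := fun k n => {t | 1 / (k + 1 : ℝ) ≤ |f n t - g t|} ∩ Icc 0 1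
  have hXm : ∀ k n, NullMeasurableSet (X k n) := fun k n =>
    (nullMeasurableSet_restrict measurableSet_Icc.nullMeasurableSet).1
      ((continuous_abs.measurable.comp_aemeasurable ((hf n).sub hg)).nullMeasurable
        measurableSet_Ici)
  choose M hM hMvol hbad using fun k =>
    (h _ (coe_ne_zero.2 (hε k).ne')).exists_of_nullMeasurable hI
      (fun n => inter_subset_right) (hXm k)
      fun t ht => hI.mono (hfg t ht _ (by positivity)) fun n hn => hn.1
  set U := toMeasurable volume (⋃ k, M k)
  refine ⟨Icc 0 1 \ U, sdiff_subset,
    measurableSet_Icc.nullMeasurableSet.diff (measurableSet_toMeasurable _ _).nullMeasurableSet,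
    ?_, fun δ hδ => ?_⟩
  · calc volume (Icc 0 1 \ (Icc 0 1 \ U)) ≤ volume U := measure_mono (by simp)
      _ ≤ ∑' k, volume (M k) := (measure_toMeasurable _).trans_le (measure_iUnion_le _)
      _ ≤ ∑' k, (ε k : ℝ≥0∞) := ENNReal.tsum_le_tsum hMvol
      _ < ENNReal.ofReal η := hεη
  · obtain ⟨k, hk⟩ := exists_nat_one_div_lt hδ
    refine hI.mono (hbad k) ?_
    rintro n ⟨t, ⟨htI, htU⟩, htδ⟩ hXM
    exact htU (subset_toMeasurable _ _ (mem_iUnion.2 ⟨k, hXM ⟨hk.le.trans htδ, htI⟩⟩))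

lemma IsEgorov.exists_cover {ι : Type} {I : Set (Set ι)} (hI : IsIdeal I) (hE : IsEgorov I)
    {X : ι → Set ℝ} (hX : ∀ n, X n ⊆ Icc (0:ℝ) 1) (hXm : ∀ n, NullMeasurableSet (X n))
    (hXI : IConvPtwise I (fun n => (X n).indicator fun _ => (1:ℝ)) fun _ => 0)
    {η : ℝ} (hη : 0 < η) :
    ∃ M ⊆ Icc (0:ℝ) 1, NullMeasurableSet M ∧ volume M ≤ ENNReal.ofReal η ∧
      {n | ¬ X n ⊆ M} ∈ I := by
  obtain ⟨M, -, hMm, hMvol, hM⟩ := hE _ _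
    (fun n => aemeasurable_const.indicator₀ ((hXm n).mono Measure.restrict_le_self))
    aemeasurable_const hXI η hη
  refine ⟨Icc 0 1 \ M, sdiff_subset, measurableSet_Icc.nullMeasurableSet.diff hMm, hMvol.le,
    hI.mono (hM 1 one_pos) fun n hn => ?_⟩
  obtain ⟨t, htX, htM⟩ := not_subset.1 hn
  exact ⟨t, by_contra fun h => htM ⟨hX n htX, h⟩, by simp [indicator_of_mem htX]⟩

/-- An ideal `I` on `ω` is Egorov iff for every sequence `(X_n)` of Lebesgue-measurable
subsets of `[0,1]` whose characteristic functions `I`-converge pointwise to `0`, there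
is a Lebesgue-measurable `M ⊆ [0,1]` with `λ(M) ≤ 1/2` and `{n : X_n ⊄ M} ∈ I`. -/
theorem egorov_iff_onehalf (I : Set (Set ℕ)) (hI : IsIdeal I) :
    IsEgorov I ↔
      ∀ X : ℕ → Set ℝ, (∀ n : ℕ, X n ⊆ Icc (0:ℝ) 1) →
        (∀ n : ℕ, NullMeasurableSet (X n) volume) →
        IConvPtwise I (fun n => (X n).indicator (fun _ => (1:ℝ))) (fun _ => (0:ℝ)) →
        ∃ M : Set ℝ, M ⊆ Icc (0:ℝ) 1 ∧ NullMeasurableSet M volume ∧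
          volume M ≤ 1/2 ∧ {n : ℕ | ¬ X n ⊆ M} ∈ I := by
  constructor
  · intro hE X hX hXm hXI
    obtain ⟨M, hM, hMm, hMvol, hbad⟩ := hE.exists_cover hI hX hXm hXI one_half_pos
    refine ⟨M, hM, hMm, hMvol.trans_eq ?_, hbad⟩
    rw [one_div, ofReal_inv_of_pos two_pos, ofReal_ofNat, one_div]
  · intro h
    have h₂ : HasSmallCovers I 2⁻¹ := fun X hX hXm hXI =>
      let ⟨M, hM, _, hMvol, hbad⟩ :=
        h X hX (fun n => (hXm n).nullMeasurableSet) (iConvPtwise_indicator_one_zero hI hXI)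
      ⟨M, hM, by rwa [one_div] at hMvol, hbad⟩
    exact isEgorov_of_hasSmallCovers hI fun β hβ => HasSmallCovers.of_ne_zero hI h₂ hβ
end

section
/- Let I be an ideal on ω and J be an ideal on ω. If J is Egorov and I ≤_RK J↾A for some A ∈ J⁺, then I is Egorov. -/
open MeasureTheory Set

/-- If `J` is Egorov and `I ≤_RK J↾A` for some `A ∈ J⁺`, then `I` is Egorov. -/
theorem egorov_of_rkle_restrict (I J : Set (Set ℕ)) (hI : IsIdeal I) (hJ : IsIdeal J)
    (hJE : IsEgorov J) (A : Set ℕ) (hA : A ∉ J)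
    (hRK : RKle I (restrictIdeal J A)) : IsEgorov I := by
  classical
  obtain ⟨h, hh⟩ := hRK
  intro f g hf hg hpt η hη
  set F : ℕ → ℝ → ℝ := fun n t => if hn : n ∈ A then f (h ⟨n, hn⟩) t else g t with hF
  have hFmeas : ∀ n, AEMeasurable (F n) (volume.restrict (Icc (0:ℝ) 1)) := by
    intro n
    by_cases hn : n ∈ A
    · simpa [hF, hn] using hf (h ⟨n, hn⟩)
    · simpa [hF, hn] using hg
  have hFpt : IConvPtwise J F g := by
    intro t ht ε hε
    have hS : {a : ℕ | ε ≤ |f a t - g t|} ∈ I := hpt t ht ε hε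
    have hJmem := (hh _).mp hS
    have heq : {n : ℕ | ε ≤ |F n t - g t|} =
        Subtype.val '' (h ⁻¹' {a : ℕ | ε ≤ |f a t - g t|}) := by
      ext n
      constructor
      · intro hn
        by_cases hnA : n ∈ A
        · exact ⟨⟨n, hnA⟩, by simpa [hF, hnA] using hn, rfl⟩
        · simp only [hF, Set.mem_setOf_eq, dif_neg hnA] at hn
          simp at hn; linarith
      · rintro ⟨⟨m, hm⟩, hmem, rfl⟩
        simpa [hF, hm] using hmem
    rw [heq]; exact hJmem
  obtain ⟨M, hM1, hM2, hM3, hM4⟩ := hJE F g hFmeas hg hFpt η hη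
  refine ⟨M, hM1, hM2, hM3, ?_⟩
  intro ε hε
  rw [hh]
  have hsub : Subtype.val '' (h ⁻¹' {a : ℕ | ∃ t ∈ M, ε ≤ |f a t - g t|})
      ⊆ {n : ℕ | ∃ t ∈ M, ε ≤ |F n t - g t|} := by
    rintro n ⟨⟨m, hm⟩, hmem, rfl⟩
    obtain ⟨t, htM, hle⟩ := hmem
    exact ⟨t, htM, by simpa [hF, hm] using hle⟩
  exact hJ.2.1 _ _ hsub (hM4 ε hε)
end

section
/- The ideal I_b is below the Solecki ideal S in the Rudin–Keisler order: I_b ≤_RK S. -/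
open MeasureTheory Set

/-- The branch `A_x = {x↾n : n ∈ ω} ⊆ 2^{<ω}` of `x ∈ 2^ω`. -/
def branchSet (x : ℕ → Bool) : Set (List Bool) :=
  {s : List Bool | ∃ n : ℕ, s = (List.range n).map x}

/-- The ideal `I_b` on `2^{<ω}`, generated by the branches `A_x` for `x ∈ 2^ω`. -/
def IbIdeal : Set (Set (List Bool)) :=
  {B | ∃ F : Set (ℕ → Bool), F.Finite ∧ B ⊆ ⋃ x ∈ F, branchSet x}

/-- `C ⊆ 2^ω` is determined by its first `n` coordinates. -/
def DetBy (C : Set (ℕ → Bool)) (n : ℕ) : Prop :=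
  ∀ x y : ℕ → Bool, (∀ i : ℕ, i < n → x i = y i) → (x ∈ C → y ∈ C)

/-- `Ω`: the family of all clopen subsets of `2^ω` of Haar measure `1/2`. A clopen set
is determined by its first `n` coordinates for some `n`, and having measure `1/2` means
that exactly `2^n / 2` of the `2^n` many patterns of the first `n` coordinates lie in it
(the patterns are counted via their extensions by `false`). -/
def OmegaHalf : Set (Set (ℕ → Bool)) :=
  {C | IsClopen C ∧ ∃ n : ℕ, DetBy C n ∧
    2 * Nat.card {s : ℕ → Bool // s ∈ C ∧ ∀ i : ℕ, n ≤ i → s i = false} = 2 ^ n}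

/-- The generator `B_x = {C ∈ Ω : x ∈ C}` of the Solecki ideal. -/
def SolGen (x : ℕ → Bool) : Set ↥OmegaHalf := {C : ↥OmegaHalf | x ∈ C.1}

/-- The Solecki ideal `S` on `Ω`, generated by the sets `B_x` for `x ∈ 2^ω`. -/
def SoleckiIdeal : Set (Set ↥OmegaHalf) :=
  {A | ∃ F : Set (ℕ → Bool), F.Finite ∧ A ⊆ ⋃ x ∈ F, SolGen x}

/-!
Send `C ∈ Ω` to the shortest `s` with `[s] ⊆ C`. If a branch `x` passes through that `s`, then
`x ∈ [s] ⊆ C`; hence preimages of sets in `I_b` lie in `S`.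

Conversely, let `s = p ++ [c]` be a sequence that no point of a finite `F ⊆ 2^ω` passes through.
Take `L > |p|` with `z ↦ z↾L` injective on `F`, and let
`C = [s] ∪ {z ∉ [p] : z L = b (z↾L)}`, where `b q` is the negation of the `L`-th bit of the point
of `F` above `q`. Flipping bit `|p|` on `[p]` and bit `L` off `[p]` is an involution exchanging `C`
with its complement, so `μ C = 1/2`. Moreover `C` misses `F`, and the only cylinder of length at
most `|s|` inside `C` is `[s]`. So `C` is sent to `s` and `C` avoids every `B_x` with `x ∈ F`.
-/

open Function

lemma two_mul_card_subtype_of_involutive {α : Type*} [Finite α] {p : α → Prop} (ι : α → α)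
    (hι : Involutive ι) (hswap : ∀ a, p (ι a) ↔ ¬p a) :
    2 * Nat.card {a // p a} = Nat.card α := by
  classical
  have hcompl : Nat.card {a // p a} = Nat.card {a // ¬p a} :=
    Nat.card_congr (Equiv.subtypeEquiv hι.toPerm fun a => by simp [hswap])
  rw [← Nat.card_congr (Equiv.sumCompl p), Nat.card_sum, ← hcompl, two_mul]

namespace Solecki

def initSeg (n : ℕ) (z : ℕ → Bool) : List Bool := (List.range n).map z

def cyl (s : List Bool) : Set (ℕ → Bool) := {z | initSeg s.length z = s}

def flipAt (k : ℕ) (z : ℕ → Bool) : ℕ → Bool := update z k (!z k)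

@[simp]
lemma length_initSeg (n : ℕ) (z : ℕ → Bool) : (initSeg n z).length = n := by
  simp [initSeg]

lemma initSeg_eq_initSeg_iff {n : ℕ} {y z : ℕ → Bool} :
    initSeg n y = initSeg n z ↔ ∀ i < n, y i = z i := by
  simp [initSeg, List.map_inj_left]

lemma initSeg_succ (n : ℕ) (z : ℕ → Bool) : initSeg (n + 1) z = initSeg n z ++ [z n] := by
  simp [initSeg, List.range_succ]

lemma mem_cyl_initSeg (n : ℕ) (z : ℕ → Bool) : z ∈ cyl (initSeg n z) := by
  simp [cyl]

lemma mem_branchSet_iff {x : ℕ → Bool} {s : List Bool} : s ∈ branchSet x ↔ x ∈ cyl s := by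
  constructor
  · rintro ⟨n, rfl⟩
    exact mem_cyl_initSeg n x
  · exact fun hx => ⟨s.length, hx.symm⟩

lemma mem_cyl_append_singleton {p : List Bool} {c : Bool} {z : ℕ → Bool} :
    z ∈ cyl (p ++ [c]) ↔ z ∈ cyl p ∧ z p.length = c := by
  simp [cyl, initSeg_succ, List.append_singleton_inj]

lemma flipAt_self (k : ℕ) (z : ℕ → Bool) : flipAt k z k = !z k := update_self ..

lemma flipAt_of_ne {k i : ℕ} (z : ℕ → Bool) (h : i ≠ k) : flipAt k z i = z i :=
  update_of_ne h ..

lemma flipAt_flipAt (k : ℕ) (z : ℕ → Bool) : flipAt k (flipAt k z) = z := by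
  simp [flipAt]

lemma initSeg_flipAt {n k : ℕ} (z : ℕ → Bool) (h : n ≤ k) : initSeg n (flipAt k z) = initSeg n z :=
  initSeg_eq_initSeg_iff.mpr fun i hi => flipAt_of_ne z (by omega)

lemma mem_cyl_congr {s : List Bool} {y z : ℕ → Bool} (h : ∀ i < s.length, y i = z i) :
    y ∈ cyl s ↔ z ∈ cyl s := by
  simp only [cyl, Set.mem_ofPred_eq, initSeg_eq_initSeg_iff.mpr h]

lemma flipAt_mem_cyl_iff {s : List Bool} {k : ℕ} {z : ℕ → Bool} (h : s.length ≤ k) :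
    flipAt k z ∈ cyl s ↔ z ∈ cyl s :=
  mem_cyl_congr fun _ hi => flipAt_of_ne z (by omega)

lemma nonempty_cyl (s : List Bool) : (cyl s).Nonempty :=
  ⟨fun i => s.getD i false, List.ext_getElem (by simp) fun i _ _ => by simp_all [initSeg]⟩

lemma isClopen_of_detBy {C : Set (ℕ → Bool)} {n : ℕ} (h : DetBy C n) : IsClopen C := by
  let r : (ℕ → Bool) → Fin n → Bool := fun z i => z i
  have hC : C = r ⁻¹' (r '' C) := by
    refine (subset_preimage_image r C).antisymm ?_
    rintro z ⟨y, hy, hyz⟩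
    exact h y z (fun i hi => congrFun hyz ⟨i, hi⟩) hy
  rw [hC]
  exact (isClopen_discrete _).preimage (by fun_prop)

def vanishingFromEquiv (N : ℕ) : {z : ℕ → Bool // ∀ i, N ≤ i → z i = false} ≃ (Fin N → Bool) where
  toFun z i := z.1 i
  invFun g := ⟨fun i => if h : i < N then g ⟨i, h⟩ else false, fun i hi => dif_neg (by omega)⟩
  left_inv z := by
    ext i
    dsimp only
    split_ifs with h
    · rfl
    · exact (z.2 i (by omega)).symm
  right_inv g := by ext i; simp

lemma mem_omegaHalf_of_involutive {C : Set (ℕ → Bool)} {N : ℕ} (hC : DetBy C N)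
    (ι : (ℕ → Bool) → ℕ → Bool) (hι : Involutive ι) (hfix : ∀ z i, N ≤ i → ι z i = z i)
    (hswap : ∀ z, ι z ∈ C ↔ z ∉ C) : C ∈ OmegaHalf := by
  refine ⟨isClopen_of_detBy hC, N, hC, ?_⟩
  let E := {z : ℕ → Bool // ∀ i, N ≤ i → z i = false}
  have : Finite E := .of_equiv _ (vanishingFromEquiv N).symm
  let ιE : E → E := fun z => ⟨ι z.1, fun i hi => (hfix z.1 i hi).trans (z.2 i hi)⟩
  have hιE : Involutive ιE := fun z => Subtype.ext (hι z.1)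
  rw [Nat.card_congr ((Equiv.subtypeSubtypeEquivSubtypeInter _ (· ∈ C)).trans
      (Equiv.subtypeEquivRight fun _ => and_comm)).symm,
    two_mul_card_subtype_of_involutive ιE hιE (fun z => hswap z.1),
    Nat.card_congr (vanishingFromEquiv N)]
  simp

def halfClopen (p : List Bool) (c : Bool) (L : ℕ) (b : List Bool → Bool) : Set (ℕ → Bool) :=
  cyl (p ++ [c]) ∪ {z | z ∉ cyl p ∧ z L = b (initSeg L z)}

open scoped Classical in
noncomputable def halfFlip (p : List Bool) (L : ℕ) (z : ℕ → Bool) : ℕ → Bool :=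
  if z ∈ cyl p then flipAt p.length z else flipAt L z

section HalfClopen

variable {p : List Bool} {c : Bool} {L : ℕ} {b : List Bool → Bool} {z : ℕ → Bool}

lemma mem_halfClopen_of_mem_cyl (hz : z ∈ cyl p) :
    z ∈ halfClopen p c L b ↔ z p.length = c := by
  simp [halfClopen, mem_cyl_append_singleton, hz]

lemma mem_halfClopen_of_not_mem_cyl (hz : z ∉ cyl p) :
    z ∈ halfClopen p c L b ↔ z L = b (initSeg L z) := by
  simp [halfClopen, mem_cyl_append_singleton, hz]

lemma detBy_halfClopen (hL : p.length < L) : DetBy (halfClopen p c L b) (L + 1) := by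
  intro x y hxy hx
  have hcyl : x ∈ cyl p ↔ y ∈ cyl p := mem_cyl_congr fun i hi => hxy i (by omega)
  by_cases hp : x ∈ cyl p
  · rw [mem_halfClopen_of_mem_cyl (hcyl.mp hp), ← hxy _ (by omega)]
    exact (mem_halfClopen_of_mem_cyl hp).mp hx
  · rw [mem_halfClopen_of_not_mem_cyl (mt hcyl.mpr hp), ← hxy L (by omega),
      ← initSeg_eq_initSeg_iff.mpr fun i hi => hxy i (by omega)]
    exact (mem_halfClopen_of_not_mem_cyl hp).mp hx

lemma halfFlip_of_mem_cyl (hz : z ∈ cyl p) : halfFlip p L z = flipAt p.length z := if_pos hz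

lemma halfFlip_of_not_mem_cyl (hz : z ∉ cyl p) : halfFlip p L z = flipAt L z := if_neg hz

lemma halfFlip_mem_cyl_iff (hL : p.length ≤ L) : halfFlip p L z ∈ cyl p ↔ z ∈ cyl p := by
  by_cases hz : z ∈ cyl p
  · rw [halfFlip_of_mem_cyl hz, flipAt_mem_cyl_iff le_rfl]
  · rw [halfFlip_of_not_mem_cyl hz, flipAt_mem_cyl_iff hL]

lemma involutive_halfFlip (hL : p.length ≤ L) : Involutive (halfFlip p L) := by
  intro z
  by_cases hz : z ∈ cyl p
  · rw [halfFlip_of_mem_cyl ((halfFlip_mem_cyl_iff hL).mpr hz), halfFlip_of_mem_cyl hz,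
      flipAt_flipAt]
  · rw [halfFlip_of_not_mem_cyl (mt (halfFlip_mem_cyl_iff hL).mp hz),
      halfFlip_of_not_mem_cyl hz, flipAt_flipAt]

lemma halfFlip_apply_of_lt (hL : p.length < L) {i : ℕ} (hi : L < i) : halfFlip p L z i = z i := by
  unfold halfFlip
  split_ifs <;> exact flipAt_of_ne z (by omega)

lemma halfFlip_mem_halfClopen_iff (hL : p.length < L) :
    halfFlip p L z ∈ halfClopen p c L b ↔ z ∉ halfClopen p c L b := by
  by_cases hz : z ∈ cyl p
  · rw [mem_halfClopen_of_mem_cyl ((halfFlip_mem_cyl_iff hL.le).mpr hz),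
      mem_halfClopen_of_mem_cyl hz, halfFlip_of_mem_cyl hz, flipAt_self]
    cases z p.length <;> cases c <;> simp
  · rw [mem_halfClopen_of_not_mem_cyl (mt (halfFlip_mem_cyl_iff hL.le).mp hz),
      mem_halfClopen_of_not_mem_cyl hz, halfFlip_of_not_mem_cyl hz, flipAt_self,
      initSeg_flipAt z le_rfl]
    cases z L <;> cases b (initSeg L z) <;> simp

lemma halfClopen_mem_omegaHalf (hL : p.length < L) : halfClopen p c L b ∈ OmegaHalf :=
  mem_omegaHalf_of_involutive (detBy_halfClopen hL) (halfFlip p L) (involutive_halfFlip hL.le)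
    (fun _ _ hi => halfFlip_apply_of_lt hL hi) fun _ => halfFlip_mem_halfClopen_iff hL

lemma exists_mem_cyl_ne {u : List Bool} (hu : u.length ≤ L) (b : List Bool → Bool) :
    ∃ z ∈ cyl u, z L ≠ b (initSeg L z) := by
  obtain ⟨w, hw⟩ := nonempty_cyl u
  by_cases hwL : w L = b (initSeg L w)
  · refine ⟨flipAt L w, (flipAt_mem_cyl_iff hu).mpr hw, ?_⟩
    rw [flipAt_self, initSeg_flipAt w le_rfl, ← hwL]
    cases w L <;> simp
  · exact ⟨w, hw, hwL⟩

lemma eq_of_cyl_subset_halfClopen (hL : p.length < L) {u : List Bool}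
    (hu : cyl u ⊆ halfClopen p c L b) (hlen : u.length ≤ p.length + 1) : u = p ++ [c] := by
  obtain ⟨z, hzu, hzL⟩ := exists_mem_cyl_ne (u := u) (L := L) (by omega) b
  have hzs : z ∈ cyl (p ++ [c]) := by
    rcases hu hzu with h | ⟨-, h⟩
    · exact h
    · exact absurd h hzL
  obtain ⟨hzp, hzc⟩ := mem_cyl_append_singleton.mp hzs
  rcases hlen.lt_or_eq with hlt | heq
  · have h := (mem_halfClopen_of_mem_cyl ((flipAt_mem_cyl_iff le_rfl).mpr hzp)).mp
      (hu ((flipAt_mem_cyl_iff (by omega)).mpr hzu))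
    rw [flipAt_self, hzc] at h
    cases c <;> simp at h
  · have hlen' : (p ++ [c]).length = u.length := by simp [heq]
    rw [← hzu, ← hlen']
    exact hzs

end HalfClopen

lemma eventually_injOn_initSeg {F : Set (ℕ → Bool)} (hF : F.Finite) :
    ∀ᶠ L in Filter.atTop, InjOn (initSeg L) F := by
  have h : ∀ y ∈ F, ∀ z ∈ F, ∀ᶠ L in Filter.atTop, initSeg L y = initSeg L z → y = z := by
    intro y _ z _
    by_cases hyz : y = z
    · exact .of_forall fun _ _ => hyz
    obtain ⟨i, hi⟩ := Function.ne_iff.mp hyz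
    filter_upwards [Filter.eventually_gt_atTop i] with L hL heq
    exact absurd (initSeg_eq_initSeg_iff.mp heq i hL) hi
  filter_upwards [hF.eventually_all.mpr fun y hy => hF.eventually_all.mpr (h y hy)]
    with L hL y hy z hz using hL y hy z hz

open scoped Classical in
lemma exists_halfClopen_disjoint {p : List Bool} {c : Bool} {F : Set (ℕ → Bool)} (hF : F.Finite)
    (hFs : ∀ y ∈ F, y ∉ cyl (p ++ [c])) :
    ∃ L b, p.length < L ∧ ∀ y ∈ F, y ∉ halfClopen p c L b := by
  obtain ⟨L, hinj, hL⟩ :=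
    ((eventually_injOn_initSeg hF).and (Filter.eventually_gt_atTop p.length)).exists
  refine ⟨L, fun q => decide (∃ y ∈ F, initSeg L y = q ∧ y L = false), hL, fun y hy hyC => ?_⟩
  by_cases hyp : y ∈ cyl p
  · exact hFs y hy (mem_cyl_append_singleton.mpr ⟨hyp, (mem_halfClopen_of_mem_cyl hyp).mp hyC⟩)
  · have hbit : (∃ y' ∈ F, initSeg L y' = initSeg L y ∧ y' L = false) ↔ y L = false :=
      ⟨fun ⟨_, hy', heq, h⟩ => hinj hy' hy heq ▸ h, fun h => ⟨y, hy, rfl, h⟩⟩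
    have h := (mem_halfClopen_of_not_mem_cyl hyp).mp hyC
    simp only [hbit] at h
    cases hy : y L <;> simp [hy] at h

lemma exists_cyl_subset {C : Set (ℕ → Bool)} (hC : C ∈ OmegaHalf) : ∃ u, cyl u ⊆ C := by
  obtain ⟨-, n, hdet, hcard⟩ := hC
  have hpos : 0 < 2 ^ n := Nat.two_pow_pos n
  have hcard_pos : 0 < Nat.card {σ // σ ∈ C ∧ ∀ i, n ≤ i → σ i = false} := by omega
  obtain ⟨⟨σ, hσ, -⟩⟩ := (Nat.card_pos_iff.mp hcard_pos).1
  refine ⟨initSeg n σ, fun z hz => hdet σ z (fun i hi => ?_) hσ⟩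
  exact (initSeg_eq_initSeg_iff.mp (by simpa [cyl] using hz) i hi).symm

noncomputable def shortestCyl (C : ↥OmegaHalf) : List Bool :=
  argminOn List.length {u | cyl u ⊆ C.1} (exists_cyl_subset C.2)

lemma cyl_shortestCyl_subset (C : ↥OmegaHalf) : cyl (shortestCyl C) ⊆ C.1 :=
  argminOn_mem List.length {u | cyl u ⊆ C.1} _

lemma shortestCyl_eq {C : ↥OmegaHalf} {s : List Bool} (hs : cyl s ⊆ C.1)
    (huniq : ∀ u, cyl u ⊆ C.1 → u.length ≤ s.length → u = s) : shortestCyl C = s :=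
  huniq _ (cyl_shortestCyl_subset C) (argminOn_le _ _ hs)

lemma exists_shortestCyl_eq {p : List Bool} {c : Bool} {F : Set (ℕ → Bool)} (hF : F.Finite)
    (hFs : ∀ y ∈ F, y ∉ cyl (p ++ [c])) :
    ∃ C : ↥OmegaHalf, shortestCyl C = p ++ [c] ∧ ∀ y ∈ F, y ∉ C.1 := by
  obtain ⟨L, b, hL, hFC⟩ := exists_halfClopen_disjoint hF hFs
  refine ⟨⟨halfClopen p c L b, halfClopen_mem_omegaHalf hL⟩, ?_, hFC⟩
  exact shortestCyl_eq subset_union_left fun u hu hlen =>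
    eq_of_cyl_subset_halfClopen hL hu (by simpa using hlen)

end Solecki

open Solecki

/-- `I_b` is below the Solecki ideal `S` in the Rudin–Keisler order. -/
theorem ib_RK_le_solecki : RKle IbIdeal SoleckiIdeal := by
  refine ⟨shortestCyl, fun A => ⟨?_, ?_⟩⟩
  · rintro ⟨F, hF, hAF⟩
    refine ⟨F, hF, fun C hC => ?_⟩
    obtain ⟨x, hxF, hx⟩ := mem_iUnion₂.mp (hAF hC)
    exact mem_iUnion₂.mpr ⟨x, hxF, cyl_shortestCyl_subset C (mem_branchSet_iff.mp hx)⟩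
  · rintro ⟨F, hF, hAF⟩
    -- one extra branch covers `[]`, as `F` may be empty
    refine ⟨insert (fun _ => false) F, hF.insert _, fun t ht => mem_iUnion₂.mpr ?_⟩
    obtain rfl | ⟨p, c, rfl⟩ := t.eq_nil_or_concat'
    · exact ⟨_, mem_insert _ _, 0, rfl⟩
    by_contra! hFt
    obtain ⟨C, hCt, hCF⟩ := exists_shortestCyl_eq hF fun y hy hyt =>
      hFt y (mem_insert_of_mem _ hy) (mem_branchSet_iff.mpr hyt)
    obtain ⟨x, hxF, hxC⟩ := mem_iUnion₂.mp (hAF (show shortestCyl C ∈ A from hCt ▸ ht))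
    exact hCF x hxF hxC
end

section
/- The ideal ED_Fin is below Mazur's ideal M in the Rudin–Blass order: ED_Fin ≤_RB M. -/
open MeasureTheory Set

/-- `Δ = {(i,j) ∈ ω² : i ≥ j}`. -/
def DeltaSet : Set (ℕ × ℕ) := {p : ℕ × ℕ | p.2 ≤ p.1}

/-- The ideal `ED_Fin` on `Δ`: sets whose vertical sections have uniformly bounded size. -/
def EDFinIdeal : Set (Set ↥DeltaSet) :=
  {A | ∃ k : ℕ, ∀ n : ℕ,
    {j : ℕ | ∃ h : ((n, j) : ℕ × ℕ) ∈ DeltaSet, (⟨(n, j), h⟩ : ↥DeltaSet) ∈ A}.ncard ≤ k}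

/-- The underlying set `∑_{n∈ω} (2n)^n` of Mazur's ideal. -/
abbrev MazurPt := Σ n : ℕ, (Fin n → Fin (2 * n))

/-- `M^n_i = {f ∈ (2n)^n : i ∉ f[n]}`. -/
def MazurM (n : ℕ) (i : Fin (2 * n)) : Set (Fin n → Fin (2 * n)) :=
  {f | ∀ j : Fin n, f j ≠ i}

/-- `φ_n(B) = min{|F| : F ⊆ 2n, B ⊆ ⋃_{i∈F} M^n_i}`. -/
noncomputable def mazurPhi (n : ℕ) (B : Set (Fin n → Fin (2 * n))) : ℕ :=
  sInf {k : ℕ | ∃ F : Finset (Fin (2 * n)), F.card = k ∧ B ⊆ ⋃ i ∈ F, MazurM n i}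

/-- Mazur's ideal `M` on `∑_{n∈ω} (2n)^n`: sets `A` with `sup_n φ_n(A_{(n)}) < ∞`. -/
def MazurIdeal : Set (Set MazurPt) :=
  {A | ∃ k : ℕ, ∀ n : ℕ, mazurPhi n {f | (⟨n, f⟩ : MazurPt) ∈ A} ≤ k}


namespace EdfinMazurAux

/-- least natural number missing from the range of `f` (as values). -/
noncomputable def jmin {n : ℕ} (f : Fin n → Fin (2 * n)) : ℕ :=
  sInf {i : ℕ | ∀ m : Fin n, (f m : ℕ) ≠ i}

lemma jmin_missing {n : ℕ} (f : Fin n → Fin (2 * n)) :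
    (∀ m : Fin n, (f m : ℕ) ≠ jmin f) ∧ jmin f ≤ n := by
  have h : ∃ i ∈ Finset.Iic n, i ∉ Finset.image (fun m => (f m : ℕ)) Finset.univ := by
    by_contra h
    push_neg at h
    have hsub : Finset.Iic n ⊆ Finset.image (fun m => (f m : ℕ)) Finset.univ := h
    have h1 := Finset.card_le_card hsub
    have h2 := Finset.card_image_le (s := (Finset.univ : Finset (Fin n)))
      (f := fun m => (f m : ℕ))
    simp [Nat.card_Iic] at h1 h2
    omega
  obtain ⟨i, hi, hmiss⟩ := h
  have hmem : i ∈ {i : ℕ | ∀ m : Fin n, (f m : ℕ) ≠ i} := by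
    intro m hm
    exact hmiss (Finset.mem_image.mpr ⟨m, Finset.mem_univ m, hm⟩)
  constructor
  · exact Nat.sInf_mem ⟨i, hmem⟩
  · exact le_trans (Nat.sInf_le hmem) (Finset.mem_Iic.mp hi)

lemma jmin_hit {n : ℕ} (f : Fin n → Fin (2 * n)) {i : ℕ} (hi : i < jmin f) :
    ∃ m : Fin n, (f m : ℕ) = i := by
  by_contra h
  push_neg at h
  have hm : i ∈ {i : ℕ | ∀ m : Fin n, (f m : ℕ) ≠ i} := h
  have h2 := Nat.sInf_le hm
  rw [jmin] at hi
  omega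

/-- The finite-to-one reduction witnessing `ED_Fin ≤_RB M`. -/
noncomputable def gMap : MazurPt → ↥DeltaSet :=
  fun p => ⟨(p.1, jmin p.2), (jmin_missing p.2).2⟩

lemma mem_preimage_iff (A : Set ↥DeltaSet) (n : ℕ) (f : Fin n → Fin (2 * n)) :
    (⟨n, f⟩ : MazurPt) ∈ gMap ⁻¹' A ↔
      jmin f ∈ {j : ℕ | ∃ h : ((n, j) : ℕ × ℕ) ∈ DeltaSet,
        (⟨(n, j), h⟩ : ↥DeltaSet) ∈ A} := by
  simp only [Set.mem_preimage, gMap, Set.mem_setOf_eq]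
  constructor
  · intro h
    exact ⟨(jmin_missing f).2, h⟩
  · rintro ⟨h, hA⟩
    exact hA

lemma exists_fun_range_eq {n : ℕ} (R : Finset (Fin (2 * n))) (hne : R.Nonempty)
    (hcard : R.card ≤ n) : ∃ f : Fin n → Fin (2 * n),
    (∀ m, f m ∈ R) ∧ ∀ r ∈ R, ∃ m, f m = r := by
  have hpos : 0 < R.card := Finset.card_pos.mpr hne
  set e := R.orderIsoOfFin rfl with he
  refine ⟨fun m => (e ⟨(m : ℕ) % R.card, Nat.mod_lt _ hpos⟩ : Fin (2 * n)), ?_, ?_⟩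
  · intro m
    exact (e _).2
  · intro r hr
    refine ⟨⟨(e.symm ⟨r, hr⟩ : ℕ), lt_of_lt_of_le (e.symm ⟨r, hr⟩).2 hcard⟩, ?_⟩
    have h1 : (⟨((e.symm ⟨r, hr⟩ : ℕ)) % R.card, Nat.mod_lt _ hpos⟩ : Fin R.card)
        = e.symm ⟨r, hr⟩ := by
      ext
      simp [Nat.mod_eq_of_lt (e.symm ⟨r, hr⟩).2]
    simp only [h1]
    rw [OrderIso.apply_symm_apply]

lemma mazurPhi_zero_le (B : Set (Fin 0 → Fin (2 * 0))) (k : ℕ) : mazurPhi 0 B ≤ k := by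
  rcases B.eq_empty_or_nonempty with hB | hB
  · subst hB
    have : (0 : ℕ) ∈ {k : ℕ | ∃ F : Finset (Fin (2 * 0)), F.card = k ∧
        (∅ : Set (Fin 0 → Fin (2 * 0))) ⊆ ⋃ i ∈ F, MazurM 0 i} :=
      ⟨∅, by simp⟩
    exact le_trans (Nat.sInf_le this) (Nat.zero_le k)
  · have hempty : {k : ℕ | ∃ F : Finset (Fin (2 * 0)), F.card = k ∧
        B ⊆ ⋃ i ∈ F, MazurM 0 i} = ∅ := by
      ext m
      simp only [Set.mem_setOf_eq, Set.mem_empty_iff_false, iff_false]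
      rintro ⟨F, -, hcov⟩
      obtain ⟨f, hf⟩ := hB
      have := hcov hf
      simp only [Set.mem_iUnion] at this
      obtain ⟨i, -, -⟩ := this
      exact absurd i.isLt (by omega)
    rw [mazurPhi, hempty, Nat.sInf_empty]
    exact Nat.zero_le k

lemma forward (A : Set ↥DeltaSet) (k : ℕ)
    (hk : ∀ n : ℕ, {j : ℕ | ∃ h : ((n, j) : ℕ × ℕ) ∈ DeltaSet,
      (⟨(n, j), h⟩ : ↥DeltaSet) ∈ A}.ncard ≤ k) :
    ∀ n : ℕ, mazurPhi n {f | (⟨n, f⟩ : MazurPt) ∈ gMap ⁻¹' A} ≤ k := by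
  intro n
  rcases Nat.eq_zero_or_pos n with hn | hn
  · subst hn
    exact mazurPhi_zero_le _ k
  set S := {j : ℕ | ∃ h : ((n, j) : ℕ × ℕ) ∈ DeltaSet, (⟨(n, j), h⟩ : ↥DeltaSet) ∈ A}
    with hSdef
  have hS : S ⊆ Set.Iic n := by
    rintro j ⟨h, -⟩
    exact h
  have hfin : S.Finite := (Set.finite_Iic n).subset hS
  have hn2 : ∀ j ∈ hfin.toFinset, j < 2 * n := by
    intro j hj
    have := hS (hfin.mem_toFinset.mp hj)
    simp only [Set.mem_Iic] at this
    omega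
  have hcov : {f | (⟨n, f⟩ : MazurPt) ∈ gMap ⁻¹' A} ⊆
      ⋃ i ∈ hfin.toFinset.attachFin hn2, MazurM n i := by
    intro f hf
    have hjm : jmin f ∈ S := (mem_preimage_iff A n f).mp hf
    have hlt : jmin f < 2 * n := by
      have := hS hjm
      simp only [Set.mem_Iic] at this
      omega
    refine Set.mem_iUnion₂.mpr ⟨⟨jmin f, hlt⟩, ?_, ?_⟩
    · exact (Finset.mem_attachFin hn2).mpr (hfin.mem_toFinset.mpr hjm)
    · intro m hm
      exact (jmin_missing f).1 m (congrArg Fin.val hm)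
  have hmem : (hfin.toFinset.attachFin hn2).card ∈ {k : ℕ | ∃ F : Finset (Fin (2 * n)),
      F.card = k ∧ {f | (⟨n, f⟩ : MazurPt) ∈ gMap ⁻¹' A} ⊆ ⋃ i ∈ F, MazurM n i} :=
    ⟨_, rfl, hcov⟩
  refine le_trans (Nat.sInf_le hmem) ?_
  rw [Finset.card_attachFin]
  calc hfin.toFinset.card = S.ncard := (Set.ncard_eq_toFinset_card S hfin).symm
    _ ≤ k := hk n

lemma backward (A : Set ↥DeltaSet) (k : ℕ)
    (hk : ∀ n : ℕ, mazurPhi n {f | (⟨n, f⟩ : MazurPt) ∈ gMap ⁻¹' A} ≤ k) :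
    ∀ n : ℕ, {j : ℕ | ∃ h : ((n, j) : ℕ × ℕ) ∈ DeltaSet,
      (⟨(n, j), h⟩ : ↥DeltaSet) ∈ A}.ncard ≤ 2 * k + 2 := by
  intro n
  set S := {j : ℕ | ∃ h : ((n, j) : ℕ × ℕ) ∈ DeltaSet, (⟨(n, j), h⟩ : ↥DeltaSet) ∈ A}
    with hSdef
  have hS : S ⊆ Set.Iic n := by
    rintro j ⟨h, -⟩
    exact h
  rcases Nat.eq_zero_or_pos n with hn | hn
  · subst hn
    have h0 : S ⊆ {0} := by
      intro j hj
      have := hS hj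
      simp only [Set.mem_Iic, Nat.le_zero] at this
      simp [this]
    calc S.ncard ≤ ({0} : Set ℕ).ncard := Set.ncard_le_ncard h0 (Set.finite_singleton 0)
      _ = 1 := Set.ncard_singleton 0
      _ ≤ 2 * k + 2 := by omega
  set B := {f | (⟨n, f⟩ : MazurPt) ∈ gMap ⁻¹' A} with hBdef
  -- the covering set is nonempty, so the infimum is attained
  have hne : {k : ℕ | ∃ F : Finset (Fin (2 * n)), F.card = k ∧
      B ⊆ ⋃ i ∈ F, MazurM n i}.Nonempty := by
    refine ⟨(Finset.univ : Finset (Fin (2 * n))).card, Finset.univ, rfl, ?_⟩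
    intro f _
    have hlt : jmin f < 2 * n := by
      have := (jmin_missing f).2
      omega
    refine Set.mem_iUnion₂.mpr ⟨⟨jmin f, hlt⟩, Finset.mem_univ _, ?_⟩
    intro m hm
    exact (jmin_missing f).1 m (congrArg Fin.val hm)
  obtain ⟨F, hFcard, hFcov⟩ := Nat.sInf_mem hne
  have hFk : F.card ≤ k := by
    rw [hFcard]
    exact hk n
  have hclaim : S ⊆ ↑(F.image Fin.val) ∪ Set.Icc (n - k) n := by
    intro j hj
    by_contra hcon
    rw [Set.mem_union] at hcon
    push_neg at hcon
    obtain ⟨hjF, hjI⟩ := hcon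
    have hjn : j ≤ n := hS hj
    have hjk : j + k < n := by
      simp only [Set.mem_Icc, not_and, not_le] at hjI
      omega
    have h1 : ∀ i ∈ Finset.range j, i < 2 * n := by
      intro i hi
      have := Finset.mem_range.mp hi
      omega
    have h2 : j + 1 < 2 * n := by omega
    set R := (Finset.range j).attachFin h1 ∪ F ∪ {(⟨j + 1, h2⟩ : Fin (2 * n))} with hRdef
    have hRcard : R.card ≤ n := by
      calc R.card ≤ ((Finset.range j).attachFin h1 ∪ F).card + 1 := by
            rw [hRdef]
            exact le_trans (Finset.card_union_le _ _) (by simp)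
        _ ≤ ((Finset.range j).attachFin h1).card + F.card + 1 := by
            have := Finset.card_union_le ((Finset.range j).attachFin h1) F
            omega
        _ ≤ j + k + 1 := by
            rw [Finset.card_attachFin, Finset.card_range]
            omega
        _ ≤ n := by omega
    have hRne : (⟨j + 1, h2⟩ : Fin (2 * n)) ∈ R := by
      simp [hRdef]
    obtain ⟨f, hmem, hsurj⟩ := exists_fun_range_eq R ⟨_, hRne⟩ hRcard
    have hj2n : j < 2 * n := by omega
    have hjR : (⟨j, hj2n⟩ : Fin (2 * n)) ∉ R := by
      simp only [hRdef, Finset.mem_union, Finset.mem_singleton, Finset.mem_attachFin,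
        Finset.mem_range, not_or]
      refine ⟨⟨by omega, ?_⟩, ?_⟩
      · intro hmemF
        exact hjF (Finset.mem_image.mpr ⟨_, hmemF, rfl⟩)
      · intro heq
        have := congrArg Fin.val heq
        simp at this
    have hjmin : jmin f = j := by
      have hmiss : j ∈ {i : ℕ | ∀ m : Fin n, (f m : ℕ) ≠ i} := by
        intro m hm
        have : f m = ⟨j, hj2n⟩ := Fin.ext hm
        exact hjR (this ▸ hmem m)
      refine le_antisymm (Nat.sInf_le hmiss) ?_
      by_contra hlt
      push_neg at hlt
      have hin : (⟨jmin f, by omega⟩ : Fin (2 * n)) ∈ R := by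
        simp only [hRdef, Finset.mem_union, Finset.mem_attachFin, Finset.mem_range]
        left; left
        omega
      obtain ⟨m, hmeq⟩ := hsurj _ hin
      exact (jmin_missing f).1 m (by rw [hmeq])
    have hfB : f ∈ B := by
      rw [hBdef]
      exact (mem_preimage_iff A n f).mpr (by rw [hjmin]; exact hj)
    have := hFcov hfB
    rw [Set.mem_iUnion₂] at this
    obtain ⟨i, hiF, hiM⟩ := this
    have hiR : i ∈ R := by
      simp only [hRdef, Finset.mem_union]
      left; right
      exact hiF
    obtain ⟨m, hmeq⟩ := hsurj i hiR
    exact hiM m hmeq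
  have hfin1 : (↑(F.image Fin.val) : Set ℕ).Finite := (F.image Fin.val).finite_toSet
  have hfin2 : (Set.Icc (n - k) n).Finite := Set.finite_Icc _ _
  calc S.ncard ≤ (↑(F.image Fin.val) ∪ Set.Icc (n - k) n).ncard :=
        Set.ncard_le_ncard hclaim (hfin1.union hfin2)
    _ ≤ (↑(F.image Fin.val) : Set ℕ).ncard + (Set.Icc (n - k) n).ncard :=
        Set.ncard_union_le _ _
    _ ≤ k + (k + 1) := by
        have e1 : (↑(F.image Fin.val) : Set ℕ).ncard ≤ k := by
          rw [Set.ncard_coe_finset]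
          exact le_trans (Finset.card_image_le) hFk
        have e2 : (Set.Icc (n - k) n).ncard ≤ k + 1 := by
          rw [← Finset.coe_Icc, Set.ncard_coe_finset, Nat.card_Icc]
          omega
        omega
    _ ≤ 2 * k + 2 := by omega

end EdfinMazurAux

/-- `ED_Fin` is below Mazur's ideal `M` in the Rudin–Blass order. -/
theorem edfin_RB_le_mazur : RBle EDFinIdeal MazurIdeal := by
  refine ⟨EdfinMazurAux.gMap, ?_, ?_⟩
  · intro x
    apply Set.Finite.subset (Set.finite_range (Sigma.mk x.val.1))
    rintro ⟨n, f⟩ hp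
    have hx : EdfinMazurAux.gMap ⟨n, f⟩ = x := hp
    have h1 : n = x.val.1 := by rw [← hx]; rfl
    subst h1
    exact ⟨f, rfl⟩
  · intro A
    constructor
    · rintro ⟨k, hk⟩
      exact ⟨k, EdfinMazurAux.forward A k hk⟩
    · rintro ⟨k, hk⟩
      exact ⟨2 * k + 2, EdfinMazurAux.backward A k hk⟩
end

section
/- The ideal I_b is below ED_Fin in the Rudin–Keisler order: I_b ≤_RK ED_Fin. -/
open MeasureTheory Set

namespace IbAux

/-- Two lists differing at a common position are not prefixes of each other. -/
lemma not_prefix_of_ne {l₁ l₂ : List Bool} {d : ℕ} (h1 : d < l₁.length) (h2 : d < l₂.length)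
    (h : l₁[d] ≠ l₂[d]) : ¬ l₁ <+: l₂ := by
  intro hp
  exact h (hp.getElem h1)

lemma branch_mem (x : ℕ → Bool) (n : ℕ) : (List.range n).map x ∈ branchSet x := ⟨n, rfl⟩

lemma branch_comp {x : ℕ → Bool} {u v : List Bool} (hu : u ∈ branchSet x) (hv : v ∈ branchSet x) :
    u <+: v ∨ v <+: u := by
  obtain ⟨a, rfl⟩ := hu
  obtain ⟨b, rfl⟩ := hv
  rcases le_total a b with h | h
  · left
    rw [List.prefix_iff_eq_take]
    simp [← List.map_take, List.take_range, min_eq_left h]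
  · right
    rw [List.prefix_iff_eq_take]
    simp [← List.map_take, List.take_range, min_eq_left h]

/-- Extend a finite 0-1 sequence to an infinite one. -/
def extSeq (s : List Bool) : ℕ → Bool := fun i => s.getD i false

lemma mem_branch_extSeq (s : List Bool) : s ∈ branchSet (extSeq s) := by
  refine ⟨s.length, ?_⟩
  apply List.ext_getElem (by simp)
  intro i h1 h2
  simp [extSeq, List.getD_eq_getElem, List.getElem?_eq_getElem (by simpa using h1)]

lemma finite_mem_Ib {A : Set (List Bool)} (h : A.Finite) : A ∈ IbIdeal := by
  refine ⟨extSeq '' A, h.image _, ?_⟩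
  intro s hs
  exact Set.mem_biUnion (Set.mem_image_of_mem _ hs) (mem_branch_extSeq s)

/-- Antichain (w.r.t. prefix order) predicate on finsets of nodes. -/
def IsAnti (S : Finset (List Bool)) : Prop :=
  ∀ a ∈ S, ∀ b ∈ S, a ≠ b → ¬ a <+: b


open Classical in
/-- Recursively choose a branch along which `A` stays infinite. -/
noncomputable def Lseq (A : Set (List Bool)) : ℕ → List Bool
  | 0 => []
  | n + 1 =>
      if {s ∈ A | (Lseq A n ++ [true]) <+: s}.Infinite then Lseq A n ++ [true]
      else Lseq A n ++ [false]

lemma Lseq_succ (A : Set (List Bool)) (n : ℕ) : ∃ b : Bool, Lseq A (n+1) = Lseq A n ++ [b] := by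
  rw [Lseq]
  split <;> exact ⟨_, rfl⟩

lemma Lseq_length (A : Set (List Bool)) (n : ℕ) : (Lseq A n).length = n := by
  induction n with
  | zero => rfl
  | succ n ih => obtain ⟨b, hb⟩ := Lseq_succ A n; simp [hb, ih]

lemma Lseq_infinite {A : Set (List Bool)} (hA : A.Infinite) (n : ℕ) :
    {s ∈ A | Lseq A n <+: s}.Infinite := by
  induction n with
  | zero =>
      have : {s ∈ A | Lseq A 0 <+: s} = A := by
        ext s; simp [Lseq]
      rwa [this]
  | succ n ih =>
      set l := Lseq A n with hl
      have hsub : {s ∈ A | l <+: s} ⊆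
          {l} ∪ ({s ∈ A | (l ++ [true]) <+: s} ∪ {s ∈ A | (l ++ [false]) <+: s}) := by
        intro s hs
        obtain ⟨hsA, hp⟩ := hs
        by_cases he : s = l
        · exact Or.inl he
        · have hlen : l.length < s.length := by
            rcases lt_or_eq_of_le hp.length_le with h | h
            · exact h
            · exact absurd (List.IsPrefix.eq_of_length hp h).symm he
          have : l ++ [s[l.length]] <+: s := by
            obtain ⟨t, ht⟩ := hp
            match t, ht with
            | [], ht => simp at ht; exact absurd ht.symm he
            | b :: tl, ht =>
              subst ht
              have hb : (l ++ b :: tl)[l.length]'(by simp) = b := by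
                rw [List.getElem_append_right (Nat.le_refl _)]
                simp
              rw [hb]
              exact ⟨tl, by simp⟩
          cases hb : s[l.length] with
          | true => exact Or.inr (Or.inl ⟨hsA, by rwa [hb] at this⟩)
          | false => exact Or.inr (Or.inr ⟨hsA, by rwa [hb] at this⟩)
      by_cases ht : {s ∈ A | (l ++ [true]) <+: s}.Infinite
      · have : Lseq A (n+1) = l ++ [true] := by rw [Lseq, if_pos ht]
        rw [this]; exact ht
      · have hdef : Lseq A (n+1) = l ++ [false] := by rw [Lseq, if_neg ht]
        rw [hdef]
        by_contra hf
        rw [Set.not_infinite] at hf ht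
        exact ih (((Set.finite_singleton l).union (ht.union hf)).subset hsub)



lemma Lseq_prefix (A : Set (List Bool)) {m n : ℕ} (h : m ≤ n) : Lseq A m <+: Lseq A n := by
  induction n with
  | zero => simp_all
  | succ n ih =>
      rcases Nat.lt_or_ge m (n+1) with h' | h'
      · obtain ⟨b, hb⟩ := Lseq_succ A n
        exact (ih (by omega)).trans (by rw [hb]; exact ⟨[b], rfl⟩)
      · have : m = n + 1 := by omega
        subst this; exact List.prefix_refl _

/-- The infinite branch determined by `Lseq`. -/
noncomputable def xSeq (A : Set (List Bool)) : ℕ → Bool := fun n => (Lseq A (n+1)).getD n false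

lemma range_map_xSeq (A : Set (List Bool)) (n : ℕ) :
    (List.range n).map (xSeq A) = Lseq A n := by
  induction n with
  | zero => rfl
  | succ n ih =>
      obtain ⟨b, hb⟩ := Lseq_succ A n
      have hx : xSeq A n = b := by
        have hlen : (Lseq A n).length = n := Lseq_length A n
        show (Lseq A (n+1)).getD n false = b
        rw [hb, List.getD_eq_getElem _ _ (by simp [hlen]),
          List.getElem_append_right (by omega)]
        simp [hlen]
      rw [List.range_succ, List.map_append, ih, hb]
      simp [hx]

lemma branch_xSeq (A : Set (List Bool)) : branchSet (xSeq A) = Set.range (Lseq A) := by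
  ext s
  constructor
  · rintro ⟨n, rfl⟩; exact ⟨n, (range_map_xSeq A n).symm⟩
  · rintro ⟨n, rfl⟩; exact ⟨n, (range_map_xSeq A n).symm⟩



lemma of_ne_length_eq {t l : List Bool} (hlen : t.length = l.length) (hne : t ≠ l) :
    ∃ d : ℕ, ∃ hd : d < t.length, t[d] ≠ l[d]'(hlen ▸ hd) := by
  by_contra hc
  push_neg at hc
  exact hne (List.ext_getElem hlen (fun i h1 h2 => hc i h1))

lemma cover (k : ℕ) : ∀ A : Set (List Bool),
    (∀ S : Finset (List Bool), ↑S ⊆ A → IsAnti S → S.card ≤ k) → A ∈ IbIdeal := by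
  induction k with
  | zero =>
      intro A h
      have hA : A = ∅ := by
        ext s
        simp only [Set.mem_empty_iff_false, iff_false]
        intro hs
        have := h {s} (by simpa) ?_
        · simp at this
        · intro a ha b hb hab
          simp only [Finset.mem_singleton] at ha hb
          exact absurd (ha.trans hb.symm) hab
      rw [hA]; exact finite_mem_Ib Set.finite_empty
  | succ k ih =>
      intro A h
      by_cases hfin : A.Finite
      · exact finite_mem_Ib hfin
      have hA : A.Infinite := hfin
      set x := xSeq A with hx
      set A' := A \ branchSet x with hA'
      have hbound : ∀ S : Finset (List Bool), ↑S ⊆ A' → IsAnti S → S.card ≤ k := by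
        intro S hS hanti
        by_contra hc
        push_neg at hc
        -- pick a long witness on the branch
        set D := S.sup List.length with hD
        obtain ⟨s, hs, hsS⟩ := ((Lseq_infinite hA D).diff (S.finite_toSet)).nonempty
        obtain ⟨hsA, hspre⟩ := hs
        -- each element of S is incomparable with s
        have hkey : ∀ t ∈ S, ¬ t <+: s ∧ ¬ s <+: t := by
          intro t ht
          have htA' : t ∈ A' := hS ht
          have htD : t.length ≤ D := Finset.le_sup (f := List.length) ht
          have htne : t ≠ Lseq A t.length := by
            intro he
            exact htA'.2 (by rw [branch_xSeq]; exact ⟨t.length, he.symm⟩)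
          obtain ⟨d, hd, hdne⟩ := of_ne_length_eq
            (by rw [Lseq_length]) htne
          have hpre2 : Lseq A t.length <+: s := (Lseq_prefix A htD).trans hspre
          have hds : d < s.length := by
            have := hpre2.length_le
            rw [Lseq_length] at this
            omega
          have hsd : s[d] = (Lseq A t.length)[d]'(by rw [Lseq_length]; exact hd) :=
            (hpre2.getElem (by rw [Lseq_length]; exact hd)).symm
          have hne2 : t[d] ≠ s[d] := by rw [hsd]; exact hdne
          exact ⟨not_prefix_of_ne hd hds hne2, not_prefix_of_ne hds hd (Ne.symm hne2)⟩
        have hsnot : s ∉ S := hsS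
        have hanti' : IsAnti (insert s S) := by
          intro a ha b hb hab
          rcases Finset.mem_insert.1 ha with rfl | ha' <;>
            rcases Finset.mem_insert.1 hb with rfl | hb'
          · exact absurd rfl hab
          · exact (hkey b hb').2
          · exact (hkey a ha').1
          · exact hanti a ha' b hb' hab
        have hsub' : ↑(insert s S) ⊆ A := by
          intro a ha
          rcases Finset.mem_insert.1 ha with rfl | ha'
          · exact hsA
          · exact (hS ha').1
        have := h (insert s S) hsub' hanti'
        rw [Finset.card_insert_of_notMem hsnot] at this
        omega
      obtain ⟨F', hF'fin, hF'cov⟩ := ih A' hbound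
      refine ⟨insert x F', hF'fin.insert x, ?_⟩
      intro s hs
      by_cases hsb : s ∈ branchSet x
      · exact Set.mem_biUnion (Set.mem_insert x F') hsb
      · have : s ∈ A' := ⟨hs, hsb⟩
        obtain ⟨y, hy, hsy⟩ := Set.mem_iUnion₂.1 (hF'cov this)
        exact Set.mem_biUnion (Set.mem_insert_of_mem x hy) hsy

lemma exists_big_antichain {A : Set (List Bool)} (hA : A ∉ IbIdeal) (k : ℕ) :
    ∃ S : Finset (List Bool), ↑S ⊆ A ∧ IsAnti S ∧ k < S.card := by
  by_contra hc
  push_neg at hc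
  exact hA (cover k A (fun S h1 h2 => hc S h1 h2))



noncomputable instance : Denumerable (Finset (List Bool)) :=
  Denumerable.ofEncodableOfInfinite _

/-- Padding nodes: an antichain `1^j 0`. -/
def padNode (j : ℕ) : List Bool := List.replicate j true ++ [false]

lemma padNode_length (j : ℕ) : (padNode j).length = j + 1 := by simp [padNode]

lemma padNode_not_prefix {i j : ℕ} (h : i < j) : ¬ padNode i <+: padNode j ∧
    ¬ padNode j <+: padNode i := by
  have h1 : i < (padNode i).length := by rw [padNode_length]; omega
  have h2 : i < (padNode j).length := by rw [padNode_length]; omega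
  have hv1 : (padNode i)[i]'h1 = false := by
    show (List.replicate i true ++ [false])[i]'(by simp) = false
    rw [List.getElem_append_right (by simp)]
    simp
  have hv2 : (padNode j)[i]'h2 = true := by
    show (List.replicate j true ++ [false])[i]'(by simp; omega) = true
    rw [List.getElem_append_left (by simp; omega)]
    simp
  have hne : (padNode i)[i]'h1 ≠ (padNode j)[i]'h2 := by rw [hv1, hv2]; simp
  exact ⟨not_prefix_of_ne h1 h2 hne, not_prefix_of_ne h2 h1 (Ne.symm hne)⟩

lemma padNode_inj {i j : ℕ} {x : ℕ → Bool} (hi : padNode i ∈ branchSet x)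
    (hj : padNode j ∈ branchSet x) : i = j := by
  by_contra hne
  rcases Nat.lt_or_ge i j with h | h
  · rcases branch_comp hi hj with hp | hp
    · exact (padNode_not_prefix h).1 hp
    · exact (padNode_not_prefix h).2 hp
  · have h' : j < i := by omega
    rcases branch_comp hj hi with hp | hp
    · exact (padNode_not_prefix h').1 hp
    · exact (padNode_not_prefix h').2 hp

open Classical in
/-- The `n`-th column: a finite antichain decoded from `n`. -/
noncomputable def colSet (n : ℕ) : Finset (List Bool) :=
  if IsAnti (Denumerable.ofNat (Finset (List Bool)) (Nat.unpair n).2) then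
    Denumerable.ofNat (Finset (List Bool)) (Nat.unpair n).2 else ∅

lemma colSet_anti (n : ℕ) : IsAnti (colSet n) := by
  rw [colSet]
  split
  · assumption
  · intro a ha; simp at ha

lemma colSet_spec {S : Finset (List Bool)} (hS : IsAnti S) :
    ∃ n : ℕ, S.card ≤ n ∧ colSet n = S := by
  refine ⟨Nat.pair S.card (@Encodable.encode _ Denumerable.toEncodable S),
    Nat.left_le_pair _ _, ?_⟩
  have he : Denumerable.ofNat (Finset (List Bool))
      (Nat.unpair (Nat.pair S.card (@Encodable.encode _ Denumerable.toEncodable S))).2 = S := by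
    rw [Nat.unpair_pair]
    exact Denumerable.ofNat_encode S
  rw [colSet, he, if_pos hS]

/-- The column function. -/
noncomputable def colFun (n j : ℕ) : List Bool :=
  if h : j < (colSet n).toList.length then (colSet n).toList[j] else padNode j

lemma colFun_eq_of_lt {n j : ℕ} (h : j < (colSet n).toList.length) :
    colFun n j = (colSet n).toList[j] := dif_pos h

lemma colFun_eq_of_ge {n j : ℕ} (h : ¬ j < (colSet n).toList.length) :
    colFun n j = padNode j := dif_neg h

/-- The Rudin–Keisler reduction. -/
noncomputable def theMap : ↥DeltaSet → List Bool := fun p => colFun p.1.1 p.1.2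

lemma sec_mem {A : Set (List Bool)} {n j : ℕ} :
    (j ∈ {j : ℕ | ∃ h : ((n, j) : ℕ × ℕ) ∈ DeltaSet,
        (⟨(n, j), h⟩ : ↥DeltaSet) ∈ theMap ⁻¹' A}) ↔ j ≤ n ∧ colFun n j ∈ A := by
  constructor
  · rintro ⟨h, hmem⟩
    exact ⟨h, hmem⟩
  · rintro ⟨h, hmem⟩
    exact ⟨h, hmem⟩

lemma forward {A : Set (List Bool)} (hA : A ∈ IbIdeal) : theMap ⁻¹' A ∈ EDFinIdeal := by
  obtain ⟨F, hFfin, hcov⟩ := hA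
  refine ⟨2 * hFfin.toFinset.card, fun n => ?_⟩
  set Sec := {j : ℕ | ∃ h : ((n, j) : ℕ × ℕ) ∈ DeltaSet,
      (⟨(n, j), h⟩ : ↥DeltaSet) ∈ theMap ⁻¹' A} with hSec
  -- choice of a covering branch for each j in the section
  have hchoice : ∀ j ∈ Sec, ∃ x ∈ F, colFun n j ∈ branchSet x := by
    intro j hj
    have := (sec_mem.1 hj).2
    have := hcov this
    simpa using this
  classical
  set φ : ℕ → (ℕ → Bool) × Bool := fun j =>
    (if hj : j ∈ Sec then (hchoice j hj).choose else (fun _ => false),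
      decide (j < (colSet n).toList.length)) with hφ
  have hmaps : ∀ j ∈ Sec, φ j ∈ ↑(hFfin.toFinset ×ˢ (Finset.univ : Finset Bool)) := by
    intro j hj
    refine Finset.mem_coe.2 (Finset.mem_product.2 ⟨?_, Finset.mem_univ _⟩)
    have h1 : (φ j).1 = (hchoice j hj).choose := by simp [hφ, dif_pos hj]
    rw [h1, hFfin.mem_toFinset]
    exact (hchoice j hj).choose_spec.1
  have hinj : Set.InjOn φ Sec := by
    intro j hj j' hj' heq
    have hx : (hchoice j hj).choose = (hchoice j' hj').choose := by
      have := congrArg Prod.fst heq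
      simpa [φ, dif_pos hj, dif_pos hj'] using this
    have hflag : (j < (colSet n).toList.length) ↔ (j' < (colSet n).toList.length) := by
      have := congrArg Prod.snd heq
      simp only [φ, decide_eq_decide] at this
      exact this
    obtain ⟨y, hmem1, hmem2⟩ : ∃ y, colFun n j ∈ branchSet y ∧ colFun n j' ∈ branchSet y :=
      ⟨(hchoice j hj).choose, (hchoice j hj).choose_spec.2, by
        rw [hx]; exact (hchoice j' hj').choose_spec.2⟩
    by_cases hlt : j < (colSet n).toList.length
    · have hlt' : j' < (colSet n).toList.length := hflag.1 hlt
      rw [colFun_eq_of_lt hlt] at hmem1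
      rw [colFun_eq_of_lt hlt'] at hmem2
      have heqe : (colSet n).toList[j] = (colSet n).toList[j'] := by
        by_contra hne
        rcases branch_comp hmem1 hmem2 with hp | hp
        · exact colSet_anti n _ (Finset.mem_toList.1 (List.getElem_mem _)) _
            (Finset.mem_toList.1 (List.getElem_mem _)) hne hp
        · exact colSet_anti n _ (Finset.mem_toList.1 (List.getElem_mem _)) _
            (Finset.mem_toList.1 (List.getElem_mem _)) (Ne.symm hne) hp
      exact (List.Nodup.getElem_inj_iff (Finset.nodup_toList _)).1 heqe
    · have hlt' : ¬ j' < (colSet n).toList.length := fun h => hlt (hflag.2 h)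
      rw [colFun_eq_of_ge hlt] at hmem1
      rw [colFun_eq_of_ge hlt'] at hmem2
      exact padNode_inj hmem1 hmem2
  calc Sec.ncard ≤ (↑(hFfin.toFinset ×ˢ (Finset.univ : Finset Bool)) :
        Set ((ℕ → Bool) × Bool)).ncard :=
        Set.ncard_le_ncard_of_injOn φ hmaps hinj (Set.toFinite _)
    _ = 2 * hFfin.toFinset.card := by
        rw [Set.ncard_coe_finset, Finset.card_product]
        simp [Nat.mul_comm]

lemma backward {A : Set (List Bool)} (hA : theMap ⁻¹' A ∈ EDFinIdeal) : A ∈ IbIdeal := by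
  by_contra hnA
  obtain ⟨k, hk⟩ := hA
  obtain ⟨S, hSA, hSanti, hScard⟩ := exists_big_antichain hnA k
  obtain ⟨n, hcard_le, hcol⟩ := colSet_spec hSanti
  have hsub : ↑(Finset.range S.card) ⊆ {j : ℕ | ∃ h : ((n, j) : ℕ × ℕ) ∈ DeltaSet,
      (⟨(n, j), h⟩ : ↥DeltaSet) ∈ theMap ⁻¹' A} := by
    intro j hj
    simp only [Finset.coe_range, Set.mem_Iio] at hj
    have hlen : j < (colSet n).toList.length := by
      rw [hcol, Finset.length_toList]; exact hj
    refine sec_mem.2 ⟨by omega, ?_⟩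
    have hsubA : ↑(colSet n) ⊆ A := by rw [hcol]; exact hSA
    rw [colFun_eq_of_lt hlen]
    apply hsubA
    have : (colSet n).toList[j] ∈ (colSet n).toList := List.getElem_mem _
    rwa [Finset.mem_toList] at this
  have hfin : {j : ℕ | ∃ h : ((n, j) : ℕ × ℕ) ∈ DeltaSet,
      (⟨(n, j), h⟩ : ↥DeltaSet) ∈ theMap ⁻¹' A}.Finite := by
    apply (Set.finite_Iic n).subset
    intro j hj
    exact (sec_mem.1 hj).1
  have := Set.ncard_le_ncard hsub hfin
  rw [Set.ncard_coe_finset, Finset.card_range] at this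
  have := hk n
  omega


end IbAux

/-- `I_b` is below `ED_Fin` in the Rudin–Keisler order. -/
theorem ib_RK_le_edfin : RKle IbIdeal EDFinIdeal :=
  ⟨IbAux.theMap, fun _ => ⟨IbAux.forward, IbAux.backward⟩⟩
end

section
/- The Solecki ideal S and Mazur's ideal M are not Egorov. -/
open MeasureTheory Set

/-!
Take measurable sets `E a ⊆ ℝ` with `{a | t ∈ E a} ∈ I` for every `t ∈ [0, 1]`, so that their
indicators `I`-converge pointwise to `0`. Egorov's property with `η = 1/2` would give a set `M`
meeting every subset of `[0, 1]` of measure `≥ 1/2` such that the `a` with `E a ∩ M ≠ ∅` form a set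
in `I`. For Solecki's ideal let `E_C` be the set of reals whose binary digits lie in `C`: given
sequences `x₁, …, x_k`, some cylinder `C ∈ Ω` over the first `n + 1` digits, `2ⁿ > k`, avoids all
of them, and `E_C` contains `2ⁿ` dyadic intervals of length `2^{-(n+1)}`, hence meets `M`. For
Mazur's ideal split `[0, 1)` into `2n` cells and let `E_{(n, f)}` be the union of the cells whose
index `f` misses. Then `M` meets more than `n` cells, so for any `< n` indices some `f` takes all of
them but misses a cell met by `M`; hence `φ_n ≥ n` on the `(n, f)` with `E_{(n, f)} ∩ M ≠ ∅`.
-/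

def cell (m i : ℕ) : Set ℝ := Ico ((i : ℝ) / m) ((i + 1 : ℝ) / m)

lemma mem_cell_iff {m i : ℕ} (hm : 0 < m) {t : ℝ} : t ∈ cell m i ↔ 0 ≤ t ∧ ⌊t * m⌋₊ = i := by
  have hm' : (0 : ℝ) < m := by exact_mod_cast hm
  simp only [cell, mem_Ico, div_le_iff₀ hm', lt_div_iff₀ hm']
  constructor
  · rintro ⟨h1, h2⟩
    have h0 : 0 ≤ t * m := (Nat.cast_nonneg i).trans h1
    exact ⟨nonneg_of_mul_nonneg_left h0 hm', (Nat.floor_eq_iff h0).2 ⟨h1, h2⟩⟩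
  · rintro ⟨h0, h⟩
    exact (Nat.floor_eq_iff (by positivity)).1 h

lemma eq_of_mem_cell {m i j : ℕ} {t : ℝ} (hi : t ∈ cell m i) (hj : t ∈ cell m j) : i = j := by
  rcases Nat.eq_zero_or_pos m with rfl | hm
  · simp [cell] at hi
  · exact ((mem_cell_iff hm).1 hi).2.symm.trans ((mem_cell_iff hm).1 hj).2

lemma cell_subset_Icc {m i : ℕ} (hi : i < m) : cell m i ⊆ Icc 0 1 := by
  have hm : (0 : ℝ) < m := by exact_mod_cast (Nat.zero_le i).trans_lt hi
  have hi' : (i + 1 : ℝ) ≤ m := by exact_mod_cast hi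
  intro t ht
  exact ⟨le_trans (by positivity) ht.1, ht.2.le.trans ((div_le_one hm).2 hi')⟩

lemma volume_biUnion_cell (m : ℕ) (s : Finset ℕ) :
    volume (⋃ i ∈ s, cell m i) = ENNReal.ofReal (s.card / m) := by
  have hdisj : (s : Set ℕ).PairwiseDisjoint (cell m) := fun i _ j _ hij =>
    disjoint_left.2 fun _ hti htj => hij (eq_of_mem_cell hti htj)
  have hcell : ∀ i, volume (cell m i) = ENNReal.ofReal (1 / m) := fun i => by
    rw [cell, Real.volume_Ico]
    ring_nf
  rw [measure_biUnion_finset hdisj fun _ _ => measurableSet_Ico,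
    Finset.sum_congr rfl fun i _ => hcell i, Finset.sum_const, nsmul_eq_mul, ← ENNReal.ofReal_natCast, ← ENNReal.ofReal_mul (by positivity),
    mul_one_div]

theorem not_isEgorov_of_indicator {X : Type} {I : Set (Set X)} (hI : ∅ ∈ I)
    (E : X → Set ℝ) (hE : ∀ a, MeasurableSet (E a))
    (hpt : ∀ t ∈ Icc (0 : ℝ) 1, {a | t ∈ E a} ∈ I)
    (hunif : ∀ M : Set ℝ,
      (∀ U ⊆ Icc (0 : ℝ) 1, ENNReal.ofReal (1 / 2) ≤ volume U → (M ∩ U).Nonempty) →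
      {a | (M ∩ E a).Nonempty} ∉ I) :
    ¬ IsEgorov I := by
  intro hEgorov
  set f : X → ℝ → ℝ := fun a => (E a).indicator 1
  have hlevel : ∀ a t ε, 0 < ε → (ε ≤ |f a t| ↔ t ∈ E a ∧ ε ≤ 1) := by
    intro a t ε hε
    by_cases h : t ∈ E a <;> simp [f, h, hε.not_ge]
  have hconv : IConvPtwise I f 0 := by
    intro t ht ε hε
    simp only [Pi.zero_apply, sub_zero, hlevel _ _ _ hε]
    by_cases hε1 : ε ≤ 1
    · simpa [hε1] using hpt t ht
    · simpa [hε1] using hI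
  obtain ⟨M, -, -, hMc, hMunif⟩ := hEgorov f 0
    (fun a => (measurable_const.indicator (hE a)).aemeasurable) aemeasurable_const hconv
    (1 / 2) (by norm_num)
  refine hunif M (fun U hU hUvol => ?_) ?_
  · by_contra hdisj
    have hUM : U ⊆ Icc 0 1 \ M := fun t ht => ⟨hU ht, fun htM => hdisj ⟨t, htM, ht⟩⟩
    exact (hUvol.trans (measure_mono hUM)).not_gt hMc
  · simpa [hlevel _ _ _ one_pos, Set.Nonempty] using hMunif 1 one_pos

/-- `binDigits t i` is the digit of `2^{-(i+1)}` in the binary expansion of `t ∈ [0, 1)`. -/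
noncomputable def binDigits (t : ℝ) (i : ℕ) : Bool := ⌊t * 2 ^ (i + 1)⌋₊.testBit 0

lemma measurable_binDigits : Measurable binDigits :=
  measurable_pi_iff.2 fun _ => (measurable_from_top (f := fun k : ℕ => k.testBit 0)).comp
    (Nat.measurable_floor.comp (measurable_id.mul_const _))

lemma binDigits_eq_testBit (t : ℝ) {n i : ℕ} (hi : i < n) :
    binDigits t i = ⌊t * 2 ^ n⌋₊.testBit (n - 1 - i) := by
  have h : t * 2 ^ (i + 1) = t * 2 ^ n / (2 ^ (n - 1 - i) : ℕ) := by
    rw [eq_div_iff (by positivity), Nat.cast_pow, Nat.cast_ofNat, mul_assoc, ← pow_add]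
    congr 2
    omega
  rw [binDigits, h, Nat.floor_div_natCast, Nat.testBit_div_two_pow, zero_add]

def bitPattern (n k : ℕ) (i : Fin n) : Bool := k.testBit (n - 1 - i)

lemma binDigits_comp_val_of_mem_cell {n k : ℕ} {t : ℝ} (ht : t ∈ cell (2 ^ n) k) :
    binDigits t ∘ Fin.val = bitPattern n k := by
  have hk := ((mem_cell_iff (by positivity)).1 ht).2
  funext i
  rw [Function.comp_apply, binDigits_eq_testBit t i.isLt, ← hk, Nat.cast_pow, Nat.cast_ofNat,
    bitPattern]

lemma bitPattern_injOn (n : ℕ) : InjOn (bitPattern n) (Iio (2 ^ n)) := by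
  intro k hk k' hk' h
  refine Nat.eq_of_testBit_eq fun j => ?_
  by_cases hj : j < n
  · simpa [bitPattern, show n - 1 - (n - 1 - j) = j by omega] using congrFun h ⟨n - 1 - j, by omega⟩
  · have hn : 2 ^ n ≤ 2 ^ j := Nat.pow_le_pow_right two_pos (by omega)
    rw [Nat.testBit_lt_two_pow ((mem_Iio.1 hk).trans_le hn),
      Nat.testBit_lt_two_pow ((mem_Iio.1 hk').trans_le hn)]

lemma natCard_truncated_cylinder {n : ℕ} (T : Finset (Fin n → Bool)) :
    Nat.card {s : ℕ → Bool // s ∈ {x : ℕ → Bool | x ∘ Fin.val ∈ T} ∧ ∀ i, n ≤ i → s i = false} =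
      T.card := by
  classical
  rw [← Nat.card_eq_finsetCard T]
  refine Nat.card_congr
    { toFun := fun s => ⟨s.1 ∘ Fin.val, s.2.1⟩
      invFun := fun v => ⟨fun i => if h : i < n then v.1 ⟨i, h⟩ else false, ?_, ?_⟩
      left_inv := fun s => Subtype.ext (funext fun i => ?_)
      right_inv := fun v => Subtype.ext (funext fun i => by simp) }
  · simp [Function.comp_def]
  · intro i hi
    simp [show ¬ i < n by omega]
  · by_cases hi : i < n
    · simp [hi]
    · simp [hi, s.2.2 i (by omega)]

lemma cylinder_mem_omegaHalf {n : ℕ} (T : Finset (Fin n → Bool)) (hT : 2 * T.card = 2 ^ n) :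
    {x : ℕ → Bool | x ∘ Fin.val ∈ T} ∈ OmegaHalf := by
  have hcont : Continuous fun x : ℕ → Bool => x ∘ (Fin.val : Fin n → ℕ) :=
    continuous_pi fun i => continuous_apply (i : ℕ)
  refine ⟨(isClopen_discrete (T : Set (Fin n → Bool))).preimage hcont, n, ?_, ?_⟩
  · intro x y hxy hx
    have : y ∘ Fin.val = x ∘ Fin.val := funext fun i => (hxy i i.isLt).symm
    simpa [this] using hx
  · rw [natCard_truncated_cylinder, hT]

lemma exists_mem_omegaHalf_disjoint {F : Set (ℕ → Bool)} (hF : F.Finite) :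
    ∃ C ∈ OmegaHalf, (∀ x ∈ F, x ∉ C) ∧
      ENNReal.ofReal (1 / 2) ≤ volume (Icc 0 1 ∩ binDigits ⁻¹' C) := by
  classical
  set n := hF.toFinset.card
  set used := hF.toFinset.image fun x => x ∘ (Fin.val : Fin (n + 1) → ℕ)
  set bad := (Finset.range (2 ^ (n + 1))).filter fun k => bitPattern (n + 1) k ∈ used
  have hbad : bad.card ≤ n := by
    refine (Finset.card_le_card_of_injOn (t := used) (bitPattern (n + 1)) (fun k hk => ?_) ?_).trans
      Finset.card_image_le
    · exact (Finset.mem_filter.1 hk).2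
    · exact (bitPattern_injOn _).mono fun k hk => by
        simpa using (Finset.mem_filter.1 hk).1
  obtain ⟨S, hS, hScard⟩ : ∃ S ⊆ Finset.range (2 ^ (n + 1)) \ bad, S.card = 2 ^ n := by
    refine Finset.exists_subset_card_eq ?_
    have h1 := Finset.le_card_sdiff bad (Finset.range (2 ^ (n + 1)))
    rw [Finset.card_range] at h1
    have h2 : 2 ^ (n + 1) = 2 * 2 ^ n := pow_succ' 2 n
    have := n.lt_two_pow_self
    omega
  have hSrange : ∀ k ∈ S, k < 2 ^ (n + 1) := fun k hk => by
    simpa using (Finset.mem_sdiff.1 (hS hk)).1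
  set T := S.image (bitPattern (n + 1))
  have hT : 2 * T.card = 2 ^ (n + 1) := by
    rw [Finset.card_image_of_injOn ((bitPattern_injOn _).mono fun k hk => hSrange k hk), hScard,
      pow_succ, mul_comm]
  refine ⟨_, cylinder_mem_omegaHalf T hT, fun x hx hxC => ?_, ?_⟩
  · obtain ⟨k, hk, hkx⟩ := Finset.mem_image.1 hxC
    refine (Finset.mem_sdiff.1 (hS hk)).2
      (Finset.mem_filter.2 ⟨Finset.mem_range.2 (hSrange k hk), ?_⟩)
    rw [hkx]
    exact Finset.mem_image_of_mem _ (hF.mem_toFinset.2 hx)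
  · calc ENNReal.ofReal (1 / 2) = volume (⋃ k ∈ S, cell (2 ^ (n + 1)) k) := by
          rw [volume_biUnion_cell, hScard, pow_succ]
          push_cast
          field_simp
      _ ≤ volume (Icc 0 1 ∩ binDigits ⁻¹' {x | x ∘ Fin.val ∈ T}) := by
          refine measure_mono (iUnion₂_subset fun k hk t ht =>
            ⟨cell_subset_Icc (hSrange k hk) ht, ?_⟩)
          change binDigits t ∘ Fin.val ∈ T
          rw [binDigits_comp_val_of_mem_cell ht]
          exact Finset.mem_image_of_mem _ hk

theorem not_isEgorov_soleckiIdeal : ¬ IsEgorov SoleckiIdeal := by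
  refine not_isEgorov_of_indicator ⟨∅, finite_empty, empty_subset _⟩ (fun C => binDigits ⁻¹' C.1)
    (fun C => measurable_binDigits C.2.1.isOpen.measurableSet)
    (fun t _ => ⟨{binDigits t}, finite_singleton _, fun C hC => mem_biUnion rfl hC⟩) ?_
  rintro M hM ⟨F, hF, hcover⟩
  obtain ⟨C, hC, hCF, hCvol⟩ := exists_mem_omegaHalf_disjoint hF
  obtain ⟨t, htM, -, htC⟩ := hM _ inter_subset_left hCvol
  obtain ⟨x, hx, hxC⟩ := mem_iUnion₂.1 (hcover (show (⟨C, hC⟩ : ↥OmegaHalf) ∈ _ from ⟨t, htM, htC⟩))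
  exact hCF x hx hxC

def mazurCells (a : MazurPt) : Set ℝ :=
  ⋃ (i : Fin (2 * a.1)) (_ : a.2 ∈ MazurM a.1 i), cell (2 * a.1) i

lemma measurableSet_mazurCells (a : MazurPt) : MeasurableSet (mazurCells a) :=
  MeasurableSet.iUnion fun _ => MeasurableSet.iUnion fun _ => measurableSet_Ico

lemma mazurPhi_le_card {n : ℕ} {B : Set (Fin n → Fin (2 * n))} (F : Finset (Fin (2 * n)))
    (hB : B ⊆ ⋃ i ∈ F, MazurM n i) : mazurPhi n B ≤ F.card :=
  Nat.sInf_le ⟨F, rfl, hB⟩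

lemma exists_card_eq_mazurPhi {n : ℕ} (hn : 0 < n) (B : Set (Fin n → Fin (2 * n))) :
    ∃ F : Finset (Fin (2 * n)), F.card = mazurPhi n B ∧ B ⊆ ⋃ i ∈ F, MazurM n i := by
  refine Nat.sInf_mem (s := {k | ∃ F : Finset (Fin (2 * n)), F.card = k ∧ B ⊆ ⋃ i ∈ F, MazurM n i})
    ⟨_, Finset.univ, rfl, fun f _ => ?_⟩
  obtain ⟨i, hi⟩ : ∃ i, ∀ j, f j ≠ i := by
    by_contra! hsurj
    have := Fintype.card_le_of_surjective f hsurj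
    simp only [Fintype.card_fin] at this
    omega
  exact mem_iUnion₂.2 ⟨i, Finset.mem_univ i, hi⟩

lemma exists_mem_mazurM_notMem_biUnion {n : ℕ} {F : Finset (Fin (2 * n))} (hF : F.card ≤ n)
    {i : Fin (2 * n)} (hi : i ∉ F) : ∃ f, f ∈ MazurM n i ∧ f ∉ ⋃ b ∈ F, MazurM n b := by
  obtain ⟨R, hFR, hRi, hR⟩ := Finset.exists_subsuperset_card_eq (t := Finset.univ.erase i)
    (fun b hb => Finset.mem_erase.2 ⟨fun h => hi (h ▸ hb), Finset.mem_univ b⟩) hF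
    (by rw [Finset.card_erase_of_mem (Finset.mem_univ i), Finset.card_univ, Fintype.card_fin]
        omega)
  set f := R.orderEmbOfFin hR
  have hrange : range f = R := R.range_orderEmbOfFin hR
  refine ⟨f, fun j hj => ?_, fun hf => ?_⟩
  · exact Finset.ne_of_mem_erase (hRi (R.orderEmbOfFin_mem hR j)) hj
  · obtain ⟨b, hb, hfb⟩ := mem_iUnion₂.1 hf
    obtain ⟨j, rfl⟩ : b ∈ range f := hrange ▸ hFR hb
    exact hfb j rfl

lemma mazurPhi_cells_mem_le_one (n : ℕ) (t : ℝ) :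
    mazurPhi n {f | t ∈ mazurCells ⟨n, f⟩} ≤ 1 := by
  classical
  refine (mazurPhi_le_card (Finset.univ.filter fun i => t ∈ cell (2 * n) i) fun f hf => ?_).trans
    (Finset.card_le_one.2 fun i hi j hj => Fin.ext (eq_of_mem_cell (Finset.mem_filter.1 hi).2
      (Finset.mem_filter.1 hj).2))
  obtain ⟨i, hi, hti⟩ := mem_iUnion₂.1 hf
  exact mem_iUnion₂.2 ⟨i, Finset.mem_filter.2 ⟨Finset.mem_univ i, hti⟩, hi⟩

open Classical in
lemma lt_two_mul_card_cells_meeting {M : Set ℝ}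
    (hM : ∀ U ⊆ Icc (0 : ℝ) 1, ENNReal.ofReal (1 / 2) ≤ volume U → (M ∩ U).Nonempty)
    {m : ℕ} (hm : 0 < m) :
    m < 2 * ((Finset.range m).filter fun i => (M ∩ cell m i).Nonempty).card := by
  by_contra! hle
  have hsplit := Finset.card_filter_add_card_filter_not (s := Finset.range m)
    (fun i => (M ∩ cell m i).Nonempty)
  set missed := (Finset.range m).filter fun i => ¬ (M ∩ cell m i).Nonempty
  have hmissed : m ≤ 2 * missed.card := by
    rw [Finset.card_range] at hsplit
    omega
  have hvol : ENNReal.ofReal (1 / 2) ≤ volume (⋃ i ∈ missed, cell m i) := by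
    rw [volume_biUnion_cell]
    refine ENNReal.ofReal_le_ofReal ?_
    rw [le_div_iff₀ (by exact_mod_cast hm)]
    have : (m : ℝ) ≤ 2 * missed.card := by exact_mod_cast hmissed
    linarith
  obtain ⟨t, htM, ht⟩ := hM _ (iUnion₂_subset fun i hi =>
    cell_subset_Icc (Finset.mem_range.1 (Finset.mem_filter.1 hi).1)) hvol
  obtain ⟨i, hi, hti⟩ := mem_iUnion₂.1 ht
  exact (Finset.mem_filter.1 hi).2 ⟨t, htM, hti⟩

theorem not_isEgorov_mazurIdeal : ¬ IsEgorov MazurIdeal := by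
  refine not_isEgorov_of_indicator ⟨0, fun n => mazurPhi_le_card ∅ (by simp)⟩ mazurCells
    measurableSet_mazurCells (fun t _ => ⟨1, fun n => mazurPhi_cells_mem_le_one n t⟩) ?_
  classical
  rintro M hM ⟨k, hk⟩
  obtain ⟨F, hFcard, hF⟩ := exists_card_eq_mazurPhi (by omega : 0 < k + 1) _
  have hFk : F.card ≤ k := hFcard ▸ hk (k + 1)
  obtain ⟨i, hiM, hiF⟩ := Finset.exists_mem_notMem_of_card_lt_card (s := F.map Fin.valEmbedding)
    (t := (Finset.range (2 * (k + 1))).filter fun i => (M ∩ cell (2 * (k + 1)) i).Nonempty) (by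
      have := lt_two_mul_card_cells_meeting hM (m := 2 * (k + 1)) (by omega)
      rw [Finset.card_map]
      omega)
  obtain ⟨hi, t, htM, hti⟩ := Finset.mem_filter.1 hiM
  obtain ⟨f, hfi, hfF⟩ := exists_mem_mazurM_notMem_biUnion (by omega : F.card ≤ k + 1)
    (i := ⟨i, Finset.mem_range.1 hi⟩) fun h => hiF (Finset.mem_map_of_mem _ h)
  exact hfF (hF ⟨t, htM, mem_iUnion₂.2 ⟨_, hfi, hti⟩⟩)

/-- The Solecki ideal `S` and Mazur's ideal `M` are not Egorov. -/
theorem solecki_mazur_not_egorov : ¬ IsEgorov SoleckiIdeal ∧ ¬ IsEgorov MazurIdeal :=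
  ⟨not_isEgorov_soleckiIdeal, not_isEgorov_mazurIdeal⟩
end

section
/- For every summable ideal I_{c_n} (where (c_n) is a sequence of positive reals with ∑_{n∈ω} c_n = ∞) and every A ∈ (I_{c_n})⁺, the ideal I_b is not below I_{c_n}↾A in the Rudin–Keisler order: I_b ≰_RK I_{c_n}↾A. -/
open MeasureTheory Set

/-- The summable ideal `I_c = {A ⊆ ω : ∑_{n∈A} c_n < ∞}`. -/
def summableIdeal (c : ℕ → ℝ) : Set (Set ℕ) := {A : Set ℕ | Summable (A.indicator c)}

/-!
Pull the weights `c` back along the Rudin–Keisler map to a weight on the nodes of `2^{<ω}`;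
then `I_b` would be exactly the family of sets of nodes of finite total weight. Every branch has
finite weight, so on the branch of the indicator of `{n}` there is a node above level `n` of
weight `< 2⁻ⁿ`. These nodes form a set of finite weight, but a branch through the `n`-th of them
takes the value `true` first at `n`, so no finitely many branches cover them.
-/

open scoped ENNReal

section FiniteWeight

variable {X Y : Type}

def finiteWeightSets (w : X → ℝ≥0∞) : Set (Set X) := {T | ∑' x : T, w x ≠ ∞}

noncomputable def pushWeight (f : Y → X) (d : Y → ℝ≥0∞) (x : X) : ℝ≥0∞ :=
  ∑' y : f ⁻¹' {x}, d y

theorem tsum_preimage_eq_tsum_pushWeight (f : Y → X) (d : Y → ℝ≥0∞) (T : Set X) :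
    ∑' y : f ⁻¹' T, d y = ∑' x : T, pushWeight f d x := by
  rw [tsum_subtype, tsum_subtype, ← ENNReal.tsum_fiberwise _ f]
  refine tsum_congr fun x => ?_
  have hfiber : ∀ y : f ⁻¹' {x}, (y : Y) ∈ f ⁻¹' T ↔ x ∈ T := fun y => by
    rw [mem_preimage, show f y = x from y.2]
  by_cases hx : x ∈ T
  · rw [indicator_of_mem hx, pushWeight]
    exact tsum_congr fun y => indicator_of_mem ((hfiber y).2 hx) d
  · rw [indicator_of_notMem hx]
    exact ENNReal.tsum_eq_zero.2 fun y => indicator_of_notMem (mt (hfiber y).1 hx) d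

theorem preimage_mem_finiteWeightSets_iff (f : Y → X) (d : Y → ℝ≥0∞) (T : Set X) :
    f ⁻¹' T ∈ finiteWeightSets d ↔ T ∈ finiteWeightSets (pushWeight f d) := by
  simp only [finiteWeightSets, mem_ofPred_eq, tsum_preimage_eq_tsum_pushWeight]

theorem restrictIdeal_finiteWeightSets (w : X → ℝ≥0∞) (A : Set X) :
    restrictIdeal (finiteWeightSets w) A = finiteWeightSets fun a : A => w a := by
  ext S
  simp only [restrictIdeal, finiteWeightSets, mem_ofPred_eq,
    tsum_image w Subtype.val_injective.injOn]

end FiniteWeight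

theorem summableIdeal_eq_finiteWeightSets {c : ℕ → ℝ} (hc : ∀ n, 0 ≤ c n) :
    summableIdeal c = finiteWeightSets fun n => ENNReal.ofReal (c n) := by
  ext S
  simp only [summableIdeal, finiteWeightSets, mem_ofPred_eq, ENNReal.ofReal,
    ENNReal.tsum_coe_ne_top_iff_summable_coe, Real.coe_toNNReal _ (hc _)]
  exact summable_subtype_iff_indicator.symm

theorem map_range_injective (x : ℕ → Bool) : Function.Injective fun m => (List.range m).map x :=
  fun m k h => by simpa using congrArg List.length h

theorem branchSet_eq_range (x : ℕ → Bool) :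
    branchSet x = range fun m => (List.range m).map x := by
  ext s
  simp [branchSet, eq_comm]

theorem branchSet_mem_ibIdeal (x : ℕ → Bool) : branchSet x ∈ IbIdeal :=
  ⟨{x}, finite_singleton x, by simp⟩

theorem apply_eq_of_map_range_mem_branchSet {x y : ℕ → Bool} {m : ℕ}
    (h : (List.range m).map x ∈ branchSet y) {i : ℕ} (hi : i < m) : x i = y i := by
  obtain ⟨k, hk⟩ := h
  obtain rfl : k = m := by simpa using congrArg List.length hk.symm
  exact List.map_inj_left.1 hk i (List.mem_range.2 hi)

theorem range_map_range_notMem_ibIdeal {m : ℕ → ℕ} (hm : ∀ n, n < m n) :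
    range (fun n => (List.range (m n)).map fun i => decide (i = n)) ∉ IbIdeal := by
  rintro ⟨F, hF, hcover⟩
  have hnode : ∀ n, ∃ x ∈ F, (List.range (m n)).map (fun i => decide (i = n)) ∈ branchSet x :=
    fun n => by simpa using hcover (mem_range_self n)
  choose g hgF hg using hnode
  have hg_apply : ∀ n i, i ≤ n → g n i = decide (i = n) := fun n i hi =>
    (apply_eq_of_map_range_mem_branchSet (hg n) (hi.trans_lt (hm n))).symm
  have hg_inj : Function.Injective g := by
    intro a b hab
    rcases le_total a b with h | h
    · simpa [hab, hg_apply b a h] using hg_apply a a le_rfl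
    · exact (by simpa [hab, hg_apply b b le_rfl] using hg_apply a b h : b = a).symm
  exact infinite_range_of_injective hg_inj (hF.subset (range_subset_iff.2 hgF))

theorem ibIdeal_ne_finiteWeightSets (w : List Bool → ℝ≥0∞) : IbIdeal ≠ finiteWeightSets w := by
  intro h
  have hbranch : ∀ x, ∑' m, w ((List.range m).map x) ≠ ∞ := fun x => by
    have hx : branchSet x ∈ finiteWeightSets w := h ▸ branchSet_mem_ibIdeal x
    rwa [finiteWeightSets, mem_ofPred_eq, branchSet_eq_range,
      tsum_range w (map_range_injective x)] at hx
  have hsmall (n : ℕ) :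
      ∃ m, n < m ∧ w ((List.range m).map fun i => decide (i = n)) < 2⁻¹ ^ n := by
    have hpos : (0 : ℝ≥0∞) < 2⁻¹ ^ n := ENNReal.pow_pos (by simp) n
    have htend := ENNReal.tendsto_atTop_zero_of_tsum_ne_top (hbranch fun i => decide (i = n))
    obtain ⟨m, hw, hnm⟩ :=
      ((htend.eventually_lt_const hpos).and (Filter.eventually_gt_atTop n)).exists
    exact ⟨m, hnm, hw⟩
  choose m hm hw using hsmall
  apply range_map_range_notMem_ibIdeal hm
  rw [h]
  refine ne_top_of_le_ne_top ?_ ((ENNReal.tsum_le_tsum_comp_of_surjective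
    rangeFactorization_surjective _).trans (ENNReal.tsum_le_tsum fun n => (hw n).le))
  simp

theorem not_rkle_ibIdeal_finiteWeightSets {Y : Type} (d : Y → ℝ≥0∞) :
    ¬ RKle IbIdeal (finiteWeightSets d) := by
  rintro ⟨f, hf⟩
  exact ibIdeal_ne_finiteWeightSets (pushWeight f d)
    (ext fun T => (hf T).trans (preimage_mem_finiteWeightSets_iff f d T))

theorem ib_not_RK_le_summable_restrict_general (c : ℕ → ℝ) (hpos : ∀ n : ℕ, 0 < c n) (A : Set ℕ) :
    ¬ RKle IbIdeal (restrictIdeal (summableIdeal c) A) := by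
  rw [summableIdeal_eq_finiteWeightSets fun n => (hpos n).le, restrictIdeal_finiteWeightSets]
  exact not_rkle_ibIdeal_finiteWeightSets _

/-- For every summable ideal `I_c` and every `A ∈ (I_c)⁺`, `I_b ≰_RK I_c↾A`. -/
theorem ib_not_RK_le_summable_restrict (c : ℕ → ℝ) (hpos : ∀ n : ℕ, 0 < c n)
    (hdiv : ¬ Summable c) (A : Set ℕ) (hA : A ∉ summableIdeal c) :
    ¬ RKle IbIdeal (restrictIdeal (summableIdeal c) A) :=
  ib_not_RK_le_summable_restrict_general c hpos A
end

section
/- Let I be an ideal on ω. Then the ideal I ⊗ {∅} on ω² is Egorov if and only if I is Egorov. -/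
open MeasureTheory Set

/-- The ideal `I ⊗ {∅}` on `ω²`. -/
def otimesEmpty (I : Set (Set ℕ)) : Set (Set (ℕ × ℕ)) :=
  {M : Set (ℕ × ℕ) | {n : ℕ | ∃ k : ℕ, (n, k) ∈ M} ∈ I}

/-- `I ⊗ {∅}` is Egorov iff `I` is Egorov. -/
theorem otimesEmpty_egorov_iff (I : Set (Set ℕ)) (hI : IsIdeal I) :
    IsEgorov (otimesEmpty I) ↔ IsEgorov I := by
  obtain ⟨hunion, hdown, hfin, huniv⟩ := hI
  constructor
  · -- easy direction
    intro hEg f g hf hg hconv η hη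
    obtain ⟨M, hM1, hM2, hM3, hM4⟩ :=
      hEg (fun p => f p.1) g (fun p => hf p.1) hg
        (by
          intro t ht ε hε
          have := hconv t ht ε hε
          have heq : {n : ℕ | ∃ k : ℕ, (n, k) ∈ {a : ℕ × ℕ | ε ≤ |f a.1 t - g t|}}
              = {a : ℕ | ε ≤ |f a t - g t|} := by
            ext n; simp
          simpa [otimesEmpty, heq] using this) η hη
    refine ⟨M, hM1, hM2, hM3, ?_⟩
    intro ε hε
    have := hM4 ε hε
    have heq : {n : ℕ | ∃ k : ℕ, (n, k) ∈ {a : ℕ × ℕ | ∃ t ∈ M, ε ≤ |f a.1 t - g t|}}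
        = {a : ℕ | ∃ t ∈ M, ε ≤ |f a t - g t|} := by
      ext n
      constructor
      · rintro ⟨k, hk⟩; exact hk
      · intro h; exact ⟨0, h⟩
    simpa [otimesEmpty, heq] using this
  · -- hard direction
    intro hEg F g hF hg hconv η hη
    set f : ℕ → ℝ → ℝ := fun n t => ⨆ k : ℕ, min |F (n, k) t - g t| 1 with hfdef
    have hbdd : ∀ n t, BddAbove (Set.range fun k : ℕ => min |F (n, k) t - g t| 1) := by
      intro n t
      exact ⟨1, by rintro x ⟨k, rfl⟩; exact min_le_right _ _⟩
    have hnonneg : ∀ n t, 0 ≤ f n t := by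
      intro n t
      have h0 : (0 : ℝ) ≤ min |F (n, 0) t - g t| 1 := le_min (abs_nonneg _) zero_le_one
      exact h0.trans (le_ciSup (hbdd n t) 0)
    have hkey1 : ∀ n k t (ε : ℝ), ε ≤ 1 → ε ≤ |F (n, k) t - g t| → ε ≤ f n t := by
      intro n k t ε hε1 hε
      exact (le_min hε hε1).trans (le_ciSup (hbdd n t) k)
    have hkey2 : ∀ n t (ε : ℝ), 0 < ε → ε ≤ f n t → ∃ k, ε / 2 ≤ |F (n, k) t - g t| := by
      intro n t ε hε hle
      have h2 : ε / 2 < ε := by linarith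
      obtain ⟨k, hk⟩ := exists_lt_of_lt_ciSup (lt_of_lt_of_le h2 hle)
      exact ⟨k, le_trans (le_of_lt (lt_of_lt_of_le hk (min_le_left _ _))) (le_refl _)⟩
    have hfmeas : ∀ n, AEMeasurable (f n) (volume.restrict (Icc (0:ℝ) 1)) := by
      intro n
      exact AEMeasurable.iSup fun k =>
        (by
          have h := (hF (n, k)).sub hg
          have : AEMeasurable (fun t => min (max (F (n, k) t - g t) (-(F (n, k) t - g t))) 1)
              (volume.restrict (Icc (0:ℝ) 1)) := (h.max h.neg).min aemeasurable_const
          simpa [abs] using this)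
    have hptwise : IConvPtwise I f (fun _ => 0) := by
      intro t ht ε hε
      have hmem := hconv t ht (ε / 2) (by linarith)
      have hmem' : {n : ℕ | ∃ k : ℕ, ε / 2 ≤ |F (n, k) t - g t|} ∈ I := by
        have heq : {n : ℕ | ∃ k : ℕ, (n, k) ∈ {a : ℕ × ℕ | ε / 2 ≤ |F a t - g t|}}
            = {n : ℕ | ∃ k : ℕ, ε / 2 ≤ |F (n, k) t - g t|} := by ext n; simp
        simpa [otimesEmpty, heq] using hmem
      refine hdown _ _ ?_ hmem'
      intro n hn
      simp only [Set.mem_setOf_eq, sub_zero] at hn ⊢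
      have : ε ≤ f n t := by
        have := hn
        rwa [abs_of_nonneg (hnonneg n t)] at this
      exact hkey2 n t ε hε this
    obtain ⟨M, hM1, hM2, hM3, hM4⟩ :=
      hEg f (fun _ => 0) hfmeas aemeasurable_const hptwise η hη
    refine ⟨M, hM1, hM2, hM3, ?_⟩
    intro ε hε
    set ε' : ℝ := min ε 1 with hε'def
    have hε' : 0 < ε' := lt_min hε zero_lt_one
    have hmem := hM4 ε' hε'
    refine hdown _ _ ?_ hmem
    intro n hn
    simp only [otimesEmpty, Set.mem_setOf_eq] at hn ⊢
    obtain ⟨k, t, htM, hkt⟩ := hn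
    refine ⟨t, htM, ?_⟩
    rw [sub_zero, abs_of_nonneg (hnonneg n t)]
    exact hkey1 n k t ε' (min_le_right _ _) (le_trans (min_le_left _ _) hkt)
end

section
/- Let (I_n)_{n∈ω} be a sequence of ideals on ω. Then the ideal ∑_{n∈ω} I_n on ω² is Egorov if and only if every I_n is Egorov. -/
open MeasureTheory Set

/-- The direct sum `∑_{n∈ω} I_n` on `ω²`. -/
def idealSum (I : ℕ → Set (Set ℕ)) : Set (Set (ℕ × ℕ)) :=
  {M : Set (ℕ × ℕ) | ∀ n : ℕ, {k : ℕ | (n, k) ∈ M} ∈ I n}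

/-- `∑_{n∈ω} I_n` is Egorov iff every `I_n` is Egorov. -/
theorem idealSum_egorov_iff (I : ℕ → Set (Set ℕ)) (hI : ∀ n : ℕ, IsIdeal (I n)) :
    IsEgorov (idealSum I) ↔ ∀ n : ℕ, IsEgorov (I n) := by
  constructor
  · -- sum Egorov → each I n Egorov
    intro hsum n f g hf hg hconv η hη
    set F : ℕ × ℕ → ℝ → ℝ := fun p => if p.1 = n then f p.2 else g with hF
    have hFmeas : ∀ a : ℕ × ℕ, AEMeasurable (F a) (volume.restrict (Icc (0:ℝ) 1)) := by
      intro a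
      by_cases h : a.1 = n <;> simp [hF, h, hf, hg]
    have hFconv : IConvPtwise (idealSum I) F g := by
      intro t ht ε hε m
      by_cases h : m = n
      · subst h
        have : {k : ℕ | (m, k) ∈ {a : ℕ × ℕ | ε ≤ |F a t - g t|}}
            = {k : ℕ | ε ≤ |f k t - g t|} := by
          ext k; simp [hF]
        rw [this]
        exact hconv t ht ε hε
      · have : {k : ℕ | (m, k) ∈ {a : ℕ × ℕ | ε ≤ |F a t - g t|}} = (∅ : Set ℕ) := by
          ext k
          simp only [Set.mem_setOf_eq, Set.mem_empty_iff_false, iff_false, not_le, hF, h,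
            if_false]
          simpa using hε
        rw [this]
        exact (hI m).2.2.1 ∅ Set.finite_empty
    obtain ⟨M, hM1, hM2, hM3, hM4⟩ := hsum F g hFmeas hg hFconv η hη
    refine ⟨M, hM1, hM2, hM3, ?_⟩
    intro ε hε
    have := hM4 ε hε n
    have heq : {k : ℕ | (n, k) ∈ {a : ℕ × ℕ | ∃ t ∈ M, ε ≤ |F a t - g t|}}
        = {k : ℕ | ∃ t ∈ M, ε ≤ |f k t - g t|} := by
      ext k; simp [hF]
    rwa [heq] at this
  · -- each I n Egorov → sum Egorov
    intro h f g hf hg hconv η hη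
    have hptn : ∀ n : ℕ, IConvPtwise (I n) (fun k => f (n, k)) g := by
      intro n t ht ε hε
      exact hconv t ht ε hε n
    have hex : ∀ n : ℕ, ∃ M : Set ℝ, M ⊆ Icc (0:ℝ) 1 ∧ NullMeasurableSet M volume ∧
        volume (Icc (0:ℝ) 1 \ M) < ENNReal.ofReal (η / 4 * (1/2)^n) ∧
        IConvUnif (I n) (fun k => f (n, k)) g M := by
      intro n
      have hpos : 0 < η / 4 * (1/2:ℝ)^n := by positivity
      exact h n (fun k => f (n, k)) g (fun k => hf (n, k)) hg (hptn n) _ hpos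
    choose M hM1 hM2 hM3 hM4 using hex
    refine ⟨⋂ n, M n, ?_, NullMeasurableSet.iInter hM2, ?_, ?_⟩
    · exact (Set.iInter_subset M 0).trans (hM1 0)
    · have h1 : Icc (0:ℝ) 1 \ ⋂ n, M n = ⋃ n, Icc (0:ℝ) 1 \ M n := Set.diff_iInter _ _
      rw [h1]
      have h2 : volume (⋃ n, Icc (0:ℝ) 1 \ M n) ≤ ∑' n, volume (Icc (0:ℝ) 1 \ M n) :=
        measure_iUnion_le _
      have h3 : ∑' n, volume (Icc (0:ℝ) 1 \ M n)
          ≤ ∑' n : ℕ, ENNReal.ofReal (η / 4 * (1/2)^n) :=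
        ENNReal.tsum_le_tsum fun n => (hM3 n).le
      have hsummable : Summable (fun n : ℕ => η / 4 * (1/2:ℝ)^n) :=
        (summable_geometric_of_lt_one (by norm_num) (by norm_num)).mul_left _
      have h4 : ∑' n : ℕ, ENNReal.ofReal (η / 4 * (1/2)^n) = ENNReal.ofReal (η / 2) := by
        rw [← ENNReal.ofReal_tsum_of_nonneg (fun n => by positivity) hsummable]
        congr 1
        rw [tsum_mul_left, tsum_geometric_of_lt_one (by norm_num) (by norm_num)]
        ring
      have h5 : ENNReal.ofReal (η / 2) < ENNReal.ofReal η :=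
        ENNReal.ofReal_lt_ofReal_iff hη |>.2 (by linarith)
      calc volume (⋃ n, Icc (0:ℝ) 1 \ M n) ≤ _ := h2
        _ ≤ _ := h3
        _ = _ := h4
        _ < _ := h5
    · intro ε hε n
      have hsub : {k : ℕ | (n, k) ∈ {a : ℕ × ℕ | ∃ t ∈ ⋂ m, M m, ε ≤ |f a t - g t|}}
          ⊆ {k : ℕ | ∃ t ∈ M n, ε ≤ |f (n, k) t - g t|} := by
        intro k hk
        obtain ⟨t, ht, hkt⟩ := hk
        exact ⟨t, Set.mem_iInter.1 ht n, hkt⟩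
      exact (hI n).2.1 _ _ hsub (hM4 n ε hε)
end

section
/- Let (I_n)_{n∈ω} be a sequence of ideals on ω. If every I_n is Egorov, then the intersection ⋂_{n∈ω} I_n is an Egorov ideal on ω. -/
open MeasureTheory Set

/-- If every `I_n` is Egorov, then `⋂_{n∈ω} I_n` is an Egorov ideal. -/
theorem iInter_egorov (I : ℕ → Set (Set ℕ)) (hI : ∀ n : ℕ, IsIdeal (I n))
    (hE : ∀ n : ℕ, IsEgorov (I n)) : IsEgorov (⋂ n : ℕ, I n) := by
  intro f g hf hg hconv η hη
  have hpt : ∀ n, IConvPtwise (I n) f g := fun n t ht ε hε =>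
    Set.mem_iInter.mp (hconv t ht ε hε) n
  choose M hMsub hMmeas hMvol hMunif using fun n =>
    hE n f g hf hg (hpt n) (η / 4 * (1/2)^n) (by positivity)
  refine ⟨⋂ n, M n, (Set.iInter_subset M 0).trans (hMsub 0),
    NullMeasurableSet.iInter (fun n => hMmeas n), ?_, ?_⟩
  · have h1 : Icc (0:ℝ) 1 \ ⋂ n, M n ⊆ ⋃ n, (Icc (0:ℝ) 1 \ M n) := by
      intro x hx
      rcases hx with ⟨hx1, hx2⟩
      rcases not_forall.mp (Set.mem_iInter.not.mp hx2) with ⟨n, hn⟩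
      exact Set.mem_iUnion.mpr ⟨n, hx1, hn⟩
    have hsum : Summable (fun n : ℕ => η / 4 * (1/2:ℝ)^n) :=
      (summable_geometric_of_lt_one (by norm_num) (by norm_num)).mul_left _
    calc volume (Icc (0:ℝ) 1 \ ⋂ n, M n)
        ≤ ∑' n, volume (Icc (0:ℝ) 1 \ M n) :=
          (measure_mono h1).trans (measure_iUnion_le _)
      _ ≤ ∑' n, ENNReal.ofReal (η / 4 * (1/2)^n) :=
          ENNReal.tsum_le_tsum fun n => (hMvol n).le
      _ = ENNReal.ofReal (∑' n, η / 4 * (1/2:ℝ)^n) :=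
          (ENNReal.ofReal_tsum_of_nonneg (fun n => by positivity) hsum).symm
      _ = ENNReal.ofReal (η / 2) := by
          rw [tsum_mul_left, tsum_geometric_of_lt_one (by norm_num) (by norm_num)]
          ring_nf
      _ < ENNReal.ofReal η := by
          exact ENNReal.ofReal_lt_ofReal_iff_of_nonneg (by linarith) |>.mpr (by linarith)
  · intro ε hε
    refine Set.mem_iInter.mpr fun n => ?_
    refine (hI n).2.1 _ _ (fun a ha => ?_) (hMunif n ε hε)
    obtain ⟨t, ht, h⟩ := ha
    exact ⟨t, (Set.iInter_subset M n) ht, h⟩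
end
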